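/- arXiv:1910.08885 — 8 statements merged into one kernel-verified Lean document; each statement's English description precedes it below -/
import Mathlib

section
/- Let S = {[x₁:…:x_d] ∈ P(ℝ^d) : x₁ > 0, …, x_d > 0} be the standard open simplex. Then for any two points [x₁:…:x_d], [y₁:…:y_d] ∈ S, the Hilbert metric is given by H_S([x],[y]) = max over 1 ≤ i,j ≤ d of (1/2)|log((x_i y_j)/(y_i x_j))|. -/
open Set

/-- The Hilbert (cross-ratio) distance between two points of a convex set `Ω`
(given inside an affine chart), defined via the intersection parameters of the
line through `x` and `y` with `Ω`:  if the line `t ↦ x + t • (y - x)` meets `Ω`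
exactly for `t ∈ (m, M)` (with `x` at `t = 0`, `y` at `t = 1`), then the cross
ratio `[a,x,y,b]` equals `(M * (1 - m)) / ((M - 1) * (-m))`. -/
noncomputable def hilbertDist {E : Type*} [AddCommGroup E] [Module ℝ E]
    (Ω : Set E) (x y : E) : ℝ :=
  @ite _ (x = y) (Classical.dec _) 0 <|
    (1 / 2) * Real.log
      ((sSup {t : ℝ | x + t • (y - x) ∈ Ω} * (1 - sInf {t : ℝ | x + t • (y - x) ∈ Ω})) /
        ((sSup {t : ℝ | x + t • (y - x) ∈ Ω} - 1) * (-(sInf {t : ℝ | x + t • (y - x) ∈ Ω}))))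

/-- The standard open simplex `S = {[x₁ : ⋯ : x_d] : xᵢ > 0} ⊆ P(ℝ^d)`, realized in the
affine chart `{x : ∑ i, x i = 1}`. -/
def stdOpenSimplex (d : ℕ) : Set (Fin d → ℝ) :=
  {z | (∀ i, 0 < z i) ∧ ∑ i, z i = 1}

private lemma aux_ivl1 (v t : ℝ) (hv : 1 < v) (h : 0 < 1 + t * (v - 1)) : 1 / (1 - v) < t := by
  rw [div_lt_iff_of_neg (by linarith : 1 - v < 0)]
  nlinarith

private lemma aux_ivl2 (u t : ℝ) (hu1 : u < 1) (h : 0 < 1 + t * (u - 1)) : t < 1 / (1 - u) := by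
  rw [lt_div_iff₀ (by linarith : (0:ℝ) < 1 - u)]
  nlinarith

private lemma aux_ivl3 (u v s t : ℝ) (hu1 : u < 1) (hv1 : 1 < v)
    (hiu : u ≤ s) (hiv : s ≤ v) (h1 : 1 / (1 - v) < t) (h2 : t < 1 / (1 - u)) :
    0 < 1 + t * (s - 1) := by
  rw [div_lt_iff_of_neg (by linarith : 1 - v < 0)] at h1
  rw [lt_div_iff₀ (by linarith : (0:ℝ) < 1 - u)] at h2
  rcases le_or_gt s 1 with hs | hs
  · rcases le_or_gt t 0 with ht | ht
    · nlinarith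
    · nlinarith
  · rcases le_or_gt 0 t with ht | ht
    · nlinarith
    · nlinarith

private lemma aux_key (u v : ℝ) (hu0 : 0 < u) (hu1 : u < 1) (hv1 : 1 < v) :
    (1 / (1 - u) * (1 - 1 / (1 - v))) / ((1 / (1 - u) - 1) * (-(1 / (1 - v)))) = v / u := by
  have h1 : (1:ℝ) - u ≠ 0 := by linarith
  have h2 : (1:ℝ) - v ≠ 0 := by linarith
  have hv0 : (0:ℝ) < v := by linarith
  field_simp
  rw [show (1:ℝ) - (1 - u) = u by ring, show (1:ℝ) - v - 1 = -v by ring, mul_neg, neg_div, neg_neg,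
    mul_div_cancel_left₀ v hu0.ne']

/-- On the standard open simplex the Hilbert metric is given by
`H_S([x],[y]) = max_{i,j} (1/2)|log((xᵢ yⱼ)/(yᵢ xⱼ))|`.  Points of `P(ℝ^d)` with positive
homogeneous coordinates `x`, `y` are represented in the chart by the normalizations
`(∑ xᵢ)⁻¹ • x` and `(∑ yᵢ)⁻¹ • y`. -/
theorem stmt_0 (d : ℕ) (hd : 0 < d) (x y : Fin d → ℝ)
    (hx : ∀ i, 0 < x i) (hy : ∀ i, 0 < y i) :
    hilbertDist (stdOpenSimplex d) ((∑ i, x i)⁻¹ • x) ((∑ i, y i)⁻¹ • y) =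
      ⨆ i : Fin d, ⨆ j : Fin d, (1 / 2) * |Real.log ((x i * y j) / (y i * x j))| := by
  have hne : Nonempty (Fin d) := ⟨⟨0, hd⟩⟩
  have hune : (Finset.univ : Finset (Fin d)).Nonempty := Finset.univ_nonempty
  set S := ∑ i, x i with hS
  set T := ∑ i, y i with hT
  have hS0 : 0 < S := Finset.sum_pos (fun i _ => hx i) hune
  have hT0 : 0 < T := Finset.sum_pos (fun i _ => hy i) hune
  set a : Fin d → ℝ := S⁻¹ • x with ha
  set b : Fin d → ℝ := T⁻¹ • y with hb
  set r : Fin d → ℝ := fun i => (S * y i) / (T * x i) with hr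
  have hr0 : ∀ i, 0 < r i := fun i =>
    div_pos (mul_pos hS0 (hy i)) (mul_pos hT0 (hx i))
  have ha0 : ∀ i, 0 < a i := fun i => by
    simp only [ha, Pi.smul_apply, smul_eq_mul]
    exact mul_pos (inv_pos.mpr hS0) (hx i)
  have hab : ∀ i, b i = a i * r i := by
    intro i
    simp only [ha, hb, hr, Pi.smul_apply, smul_eq_mul]
    field_simp [hS0.ne', hT0.ne', (hx i).ne']
  have hsa : ∑ i, a i = 1 := by
    simp only [ha, Pi.smul_apply, smul_eq_mul, ← Finset.mul_sum, ← hS]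
    exact inv_mul_cancel₀ hS0.ne'
  have hsb : ∑ i, b i = 1 := by
    simp only [hb, Pi.smul_apply, smul_eq_mul, ← Finset.mul_sum, ← hT]
    exact inv_mul_cancel₀ hT0.ne'
  have hratio : ∀ i j, (x i * y j) / (y i * x j) = r j / r i := by
    intro i j
    simp only [hr]
    rw [div_div_div_eq, div_eq_div_iff (mul_pos (hy i) (hx j)).ne'
      (mul_pos (mul_pos hT0 (hx j)) (mul_pos hS0 (hy i))).ne']
    ring
  by_cases hxy : a = b
  · have hr1 : ∀ i, r i = 1 := by
      intro i
      have h : a i * 1 = a i * r i := by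
        rw [mul_one]
        nth_rewrite 1 [hxy]
        exact hab i
      exact (mul_left_cancel₀ (ha0 i).ne' h).symm
    have h0 : ∀ i j : Fin d, (1 / 2 : ℝ) * |Real.log ((x i * y j) / (y i * x j))| = 0 := by
      intro i j
      rw [hratio, hr1, hr1, div_one, Real.log_one, abs_zero, mul_zero]
    rw [hilbertDist, if_pos hxy]
    symm
    calc ⨆ i, ⨆ j, (1 / 2 : ℝ) * |Real.log ((x i * y j) / (y i * x j))|
        = ⨆ _i : Fin d, ⨆ _j : Fin d, (0:ℝ) := by
          congr 1; funext i; congr 1; funext j; exact h0 i j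
      _ = 0 := by rw [ciSup_const, ciSup_const]
  · -- main case
    have hex1 : ∃ i, r i < 1 := by
      by_contra h
      push_neg at h
      have hle : ∀ i ∈ Finset.univ, a i ≤ b i := by
        intro i _
        rw [hab i]
        nlinarith [ha0 i, h i]
      obtain ⟨k, hk⟩ : ∃ k, a k ≠ b k := Function.ne_iff.mp hxy
      have : (1:ℝ) < 1 := by
        calc (1:ℝ) = ∑ i, a i := hsa.symm
          _ < ∑ i, b i := Finset.sum_lt_sum hle ⟨k, Finset.mem_univ k, lt_of_le_of_ne (hle k (Finset.mem_univ k)) hk⟩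
          _ = 1 := hsb
      exact lt_irrefl _ this
    have hex2 : ∃ i, 1 < r i := by
      by_contra h
      push_neg at h
      have hle : ∀ i ∈ Finset.univ, b i ≤ a i := by
        intro i _
        rw [hab i]
        nlinarith [ha0 i, h i]
      obtain ⟨k, hk⟩ : ∃ k, a k ≠ b k := Function.ne_iff.mp hxy
      have : (1:ℝ) < 1 := by
        calc (1:ℝ) = ∑ i, b i := hsb.symm
          _ < ∑ i, a i := Finset.sum_lt_sum hle ⟨k, Finset.mem_univ k, lt_of_le_of_ne (hle k (Finset.mem_univ k)) (Ne.symm hk)⟩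
          _ = 1 := hsa
      exact lt_irrefl _ this
    obtain ⟨i₀, -, hi₀⟩ := Finset.exists_mem_eq_inf' hune r
    obtain ⟨j₀, -, hj₀⟩ := Finset.exists_mem_eq_sup' hune r
    set u := Finset.univ.inf' hune r with hu
    set v := Finset.univ.sup' hune r with hv
    have hur : ∀ i, u ≤ r i := fun i => Finset.inf'_le _ (Finset.mem_univ i)
    have hrv : ∀ i, r i ≤ v := fun i => Finset.le_sup' _ (Finset.mem_univ i)
    have hu0 : 0 < u := by rw [hi₀]; exact hr0 i₀
    have hu1 : u < 1 := by obtain ⟨i, hi⟩ := hex1; exact lt_of_le_of_lt (hur i) hi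
    have hv1 : 1 < v := by obtain ⟨i, hi⟩ := hex2; exact lt_of_lt_of_le hi (hrv i)
    have hv0 : 0 < v := lt_trans one_pos hv1
    have hm0 : 1 / (1 - v) < 0 := div_neg_of_pos_of_neg one_pos (by linarith)
    have hM1 : 1 < 1 / (1 - u) := by rw [one_lt_div (by linarith)]; linarith
    -- membership characterization
    have hmem : ∀ t : ℝ, (a + t • (b - a) ∈ stdOpenSimplex d) ↔ ∀ i, 0 < 1 + t * (r i - 1) := by
      intro t
      have hcomp : ∀ i, (a + t • (b - a)) i = a i * (1 + t * (r i - 1)) := by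
        intro i
        simp only [Pi.add_apply, Pi.smul_apply, Pi.sub_apply, smul_eq_mul, hab i]
        ring
      constructor
      · rintro ⟨hpos, -⟩ i
        have h := hpos i
        rw [hcomp i] at h
        by_contra hcon
        push_neg at hcon
        nlinarith [ha0 i]
      · intro h
        refine ⟨fun i => by rw [hcomp i]; exact mul_pos (ha0 i) (h i), ?_⟩
        have h2 : ∑ i, (a + t • (b - a)) i = ∑ i, (a i + t * (b i - a i)) := by
          apply Finset.sum_congr rfl; intro i _; simp [smul_eq_mul]
        rw [h2, Finset.sum_add_distrib, ← Finset.mul_sum, Finset.sum_sub_distrib, hsa, hsb]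
        ring
    have hset : {t : ℝ | a + t • (b - a) ∈ stdOpenSimplex d} = Ioo (1 / (1 - v)) (1 / (1 - u)) := by
      ext t
      simp only [mem_setOf_eq, hmem t, mem_Ioo]
      constructor
      · intro h
        refine ⟨aux_ivl1 v t hv1 ?_, aux_ivl2 u t hu1 ?_⟩
        · have h1 := h j₀; rwa [← hj₀] at h1
        · have h2 := h i₀; rwa [← hi₀] at h2
      · rintro ⟨h1, h2⟩ i
        exact aux_ivl3 u v (r i) t hu1 hv1 (hur i) (hrv i) h1 h2
    rw [hilbertDist, if_neg hxy]
    rw [hset, csSup_Ioo (by linarith), csInf_Ioo (by linarith),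
      aux_key u v hu0 hu1 hv1]
    -- now RHS computation
    have hterm : ∀ i j : Fin d, (1/2 : ℝ) * |Real.log ((x i * y j) / (y i * x j))| =
        (1/2 : ℝ) * |Real.log (r j) - Real.log (r i)| := by
      intro i j
      rw [hratio i j, Real.log_div (hr0 j).ne' (hr0 i).ne']
    have hlogvu : Real.log (v / u) = Real.log v - Real.log u :=
      Real.log_div hv0.ne' hu0.ne'
    symm
    apply le_antisymm
    · apply ciSup_le
      intro i
      apply ciSup_le
      intro j
      rw [hterm i j, hlogvu]
      have hlj : Real.log (r j) ≤ Real.log v := Real.log_le_log (hr0 j) (hrv j)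
      have hli : Real.log u ≤ Real.log (r i) := Real.log_le_log hu0 (hur i)
      have hlj' : Real.log (r i) ≤ Real.log v := Real.log_le_log (hr0 i) (hrv i)
      have hli' : Real.log u ≤ Real.log (r j) := Real.log_le_log hu0 (hur j)
      have habs : |Real.log (r j) - Real.log (r i)| ≤ Real.log v - Real.log u := by
        rw [abs_le]; constructor <;> linarith
      linarith
    · have hnn : 0 ≤ Real.log (v / u) := Real.log_nonneg (by rw [le_div_iff₀ hu0]; nlinarith)
      have heq : (1/2 : ℝ) * Real.log (v / u) =
          (1/2 : ℝ) * |Real.log ((x i₀ * y j₀) / (y i₀ * x j₀))| := by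
        rw [hterm i₀ j₀, ← hi₀, ← hj₀, ← hlogvu, abs_of_nonneg hnn]
      rw [heq]
      have hbdd : ∀ k : Fin d, BddAbove (range fun j => (1/2 : ℝ) * |Real.log ((x k * y j) / (y k * x j))|) :=
        fun k => (Set.finite_range _).bddAbove
      calc (1/2 : ℝ) * |Real.log ((x i₀ * y j₀) / (y i₀ * x j₀))|
          ≤ ⨆ j, (1/2 : ℝ) * |Real.log ((x i₀ * y j) / (y i₀ * x j))| := le_ciSup (hbdd i₀) j₀
        _ ≤ ⨆ i, ⨆ j, (1/2 : ℝ) * |Real.log ((x i * y j) / (y i * x j))| :=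
            le_ciSup (f := fun i => ⨆ j, (1/2 : ℝ) * |Real.log ((x i * y j) / (y i * x j))|)
              ((Set.finite_range _).bddAbove) i₀
end

section
/- If S ⊂ P(ℝ^d) is a simplex of dimension k (i.e., projectively equivalent to the standard open simplex in P(ℝ^{k+1})), then the metric space (S, H_S) is quasi-isometric to Euclidean k-space ℝ^k. More concretely, the map Φ: S → ℝ^{k} given by Φ([x₁:…:x_{k+1}]) = (log(x₂/x₁), …, log(x_{k+1}/x₁)) is an isometry from (S, H_S) onto (ℝ^k, d), where d(v,w) = (1/2) max{ max_i |v_i − w_i|, max_{i,j} |(v_i − v_j) − (w_i − w_j)| }, and this d is bi-Lipschitz equivalent to the Euclidean metric. -/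
open Set

/-- The distance `d(v,w) = (1/2) max{ maxᵢ |vᵢ − wᵢ|, max_{i,j} |(vᵢ − vⱼ) − (wᵢ − wⱼ)| }` on `ℝ^k`. -/
noncomputable def quasiEuclidDist (k : ℕ) (v w : Fin k → ℝ) : ℝ :=
  (1 / 2) * max (⨆ i : Fin k, |v i - w i|)
    (⨆ i : Fin k, ⨆ j : Fin k, |(v i - v j) - (w i - w j)|)

/-- The map `Φ([x₁ : ⋯ : x_{k+1}]) = (log(x₂/x₁), …, log(x_{k+1}/x₁))`. -/
noncomputable def simplexLogChart (k : ℕ) (x : Fin (k + 1) → ℝ) : Fin k → ℝ :=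
  fun i => Real.log (x i.succ / x 0)


section Helpers
open Finset

lemma mySup_eq_sup' {ι : Type*} [Fintype ι] [Nonempty ι] (f : ι → ℝ) :
    (⨆ i, f i) = Finset.univ.sup' Finset.univ_nonempty f := by
  apply le_antisymm
  · exact ciSup_le fun i => Finset.le_sup' f (Finset.mem_univ i)
  · exact Finset.sup'_le _ _ fun i _ => le_ciSup (Finite.bddAbove_range f) i

lemma myiSup_zero {ι : Type*} [Fintype ι] : (⨆ _ : ι, (0:ℝ)) = 0 := by
  rcases isEmpty_or_nonempty ι with h | h
  · rw [iSup_of_empty', Real.sSup_empty]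
  · exact ciSup_const

lemma myLog_sup' {n : ℕ} (g : Fin (n+1) → ℝ) (hg : ∀ i, 0 < g i) :
    Real.log (Finset.univ.sup' Finset.univ_nonempty g) =
      Finset.univ.sup' Finset.univ_nonempty fun i => Real.log (g i) := by
  obtain ⟨i1, -, h1⟩ := Finset.exists_mem_eq_sup' Finset.univ_nonempty g
  rw [h1]
  apply le_antisymm
  · exact Finset.le_sup' (fun i => Real.log (g i)) (Finset.mem_univ i1)
  · exact Finset.sup'_le _ _ fun i _ =>
      Real.log_le_log (hg i) (h1 ▸ Finset.le_sup' g (Finset.mem_univ i))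

lemma myComb (k : ℕ) (c : Fin (k+1) → ℝ) :
    (Finset.univ.sup' Finset.univ_nonempty c) +
      (Finset.univ.sup' Finset.univ_nonempty fun p => -c p) =
      max (⨆ i : Fin k, |c i.succ - c 0|) (⨆ i : Fin k, ⨆ j : Fin k, |c i.succ - c j.succ|) := by
  rcases Nat.eq_zero_or_pos k with hk | hk
  · subst hk
    have h0 : ∀ p : Fin 1, p = 0 := fun p => Subsingleton.elim _ _
    have e1 : (⨆ i : Fin 0, |c i.succ - c 0|) = 0 := by
      rw [iSup_of_empty', Real.sSup_empty]
    have e2 : (⨆ i : Fin 0, ⨆ j : Fin 0, |c i.succ - c j.succ|) = 0 := by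
      rw [iSup_of_empty', Real.sSup_empty]
    rw [e1, e2, max_self]
    obtain ⟨p1, -, hp1⟩ := Finset.exists_mem_eq_sup' (Finset.univ_nonempty (α := Fin 1)) c
    obtain ⟨q1, -, hq1⟩ := Finset.exists_mem_eq_sup' (Finset.univ_nonempty (α := Fin 1))
      (fun p => -c p)
    rw [hp1, hq1, h0 p1, h0 q1]; ring
  haveI : Nonempty (Fin k) := ⟨⟨0, hk⟩⟩
  apply le_antisymm
  · obtain ⟨p1, -, hp1⟩ := Finset.exists_mem_eq_sup' (Finset.univ_nonempty (α := Fin (k+1))) c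
    obtain ⟨q1, -, hq1⟩ := Finset.exists_mem_eq_sup' (Finset.univ_nonempty (α := Fin (k+1)))
      (fun p => -c p)
    rw [hp1, hq1]
    have bdd1 : BddAbove (Set.range fun i : Fin k => |c i.succ - c 0|) :=
      Finite.bddAbove_range _
    have bdd2 : BddAbove (Set.range fun i : Fin k => ⨆ j : Fin k, |c i.succ - c j.succ|) :=
      Finite.bddAbove_range _
    have hfirst : ∀ i : Fin k, |c i.succ - c 0| ≤
        max (⨆ i : Fin k, |c i.succ - c 0|) (⨆ i : Fin k, ⨆ j : Fin k, |c i.succ - c j.succ|) :=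
      fun i => le_trans (le_ciSup bdd1 i) (le_max_left _ _)
    have hsecond : ∀ i j : Fin k, |c i.succ - c j.succ| ≤
        max (⨆ i : Fin k, |c i.succ - c 0|) (⨆ i : Fin k, ⨆ j : Fin k, |c i.succ - c j.succ|) := by
      intro i j
      refine le_trans (le_ciSup (Finite.bddAbove_range
        (fun j : Fin k => |c i.succ - c j.succ|)) j) (le_trans (le_ciSup bdd2 i)
        (le_max_right _ _))
    rcases Fin.eq_zero_or_eq_succ p1 with hp | ⟨i, hp⟩ <;>
      rcases Fin.eq_zero_or_eq_succ q1 with hq | ⟨j, hq⟩ <;> subst hp <;> subst hq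
    · have := hfirst ⟨0, hk⟩
      have h2 : (0:ℝ) ≤ |c (⟨0, hk⟩ : Fin k).succ - c 0| := abs_nonneg _
      linarith
    · have := hfirst j
      have h2 : c 0 + -c j.succ ≤ |c j.succ - c 0| := by
        rw [abs_sub_comm]; exact le_trans (by linarith) (le_abs_self _)
      linarith
    · have := hfirst i
      have h2 : c i.succ + -c 0 ≤ |c i.succ - c 0| := le_trans (by linarith) (le_abs_self _)
      linarith
    · have := hsecond i j
      have h2 : c i.succ + -c j.succ ≤ |c i.succ - c j.succ| :=
        le_trans (by linarith) (le_abs_self _)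
      linarith
  · have hP : ∀ p : Fin (k+1), c p ≤ Finset.univ.sup' Finset.univ_nonempty c :=
      fun p => Finset.le_sup' c (Finset.mem_univ p)
    have hN : ∀ p : Fin (k+1), -c p ≤ Finset.univ.sup' Finset.univ_nonempty fun p => -c p :=
      fun p => Finset.le_sup' (fun p => -c p) (Finset.mem_univ p)
    apply max_le
    · refine ciSup_le fun i => ?_
      rw [abs_sub_le_iff]
      constructor
      · linarith [hP i.succ, hN 0]
      · linarith [hP 0, hN i.succ]
    · refine ciSup_le fun i => ciSup_le fun j => ?_
      rw [abs_sub_le_iff]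
      constructor
      · linarith [hP i.succ, hN j.succ]
      · linarith [hP j.succ, hN i.succ]

lemma myMainCalc (k : ℕ) (a b : Fin (k+1) → ℝ) (ha : ∀ i, 0 < a i) (hb : ∀ i, 0 < b i)
    (hsa : ∑ i, a i = 1) (hsb : ∑ i, b i = 1) (hab : a ≠ b) :
    hilbertDist (stdOpenSimplex (k+1)) a b =
      (1/2) * ((Finset.univ.sup' Finset.univ_nonempty fun p => Real.log (a p) - Real.log (b p)) +
        (Finset.univ.sup' Finset.univ_nonempty fun p => Real.log (b p) - Real.log (a p))) := by
  classical
  have hexP : ∃ i, b i < a i := by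
    by_contra h
    push_neg at h
    obtain ⟨i0, hi0⟩ := Function.ne_iff.mp hab
    have : (∑ i, a i) < ∑ i, b i :=
      Finset.sum_lt_sum (fun i _ => h i) ⟨i0, mem_univ _, lt_of_le_of_ne (h i0) hi0⟩
    rw [hsa, hsb] at this; exact lt_irrefl 1 this
  have hexM : ∃ i, a i < b i := by
    by_contra h
    push_neg at h
    obtain ⟨i0, hi0⟩ := Function.ne_iff.mp hab
    have : (∑ i, b i) < ∑ i, a i :=
      Finset.sum_lt_sum (fun i _ => h i) ⟨i0, mem_univ _, lt_of_le_of_ne (h i0) (Ne.symm hi0)⟩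
    rw [hsa, hsb] at this; exact lt_irrefl 1 this
  set sp : Finset (Fin (k+1)) := univ.filter (fun i => b i < a i) with hsp
  set sm : Finset (Fin (k+1)) := univ.filter (fun i => a i < b i) with hsm
  have hspne : sp.Nonempty := ⟨hexP.choose, by simp [hsp, hexP.choose_spec]⟩
  have hsmne : sm.Nonempty := ⟨hexM.choose, by simp [hsm, hexM.choose_spec]⟩
  have hspmem : ∀ i ∈ sp, b i < a i := fun i hi => by
    rw [hsp, mem_filter] at hi; exact hi.2
  have hsmmem : ∀ i ∈ sm, a i < b i := fun i hi => by
    rw [hsm, mem_filter] at hi; exact hi.2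
  set f : Fin (k+1) → ℝ := fun i => a i / (a i - b i) with hf
  set u := sp.inf' hspne f with hu
  set l := sm.sup' hsmne f with hl
  have hu1 : 1 < u := by
    rw [hu, Finset.lt_inf'_iff]
    intro i hi
    have h2 := hspmem i hi
    rw [hf]
    rw [lt_div_iff₀ (by linarith)]
    nlinarith [hb i]
  have hl0 : l < 0 := by
    rw [hl, Finset.sup'_lt_iff]
    intro i hi
    exact div_neg_of_pos_of_neg (ha i) (by linarith [hsmmem i hi])
  have hlu : l < u := by linarith
  have hset : {t : ℝ | a + t • (b - a) ∈ stdOpenSimplex (k+1)} = Set.Ioo l u := by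
    ext t
    simp only [Set.mem_setOf_eq, stdOpenSimplex, Set.mem_Ioo, Pi.add_apply, Pi.smul_apply,
      Pi.sub_apply, smul_eq_mul]
    constructor
    · rintro ⟨hpos, -⟩
      constructor
      · rw [hl, Finset.sup'_lt_iff]
        intro i hi
        have h2 := hsmmem i hi
        have h3 := hpos i
        rw [hf]
        rw [div_lt_iff_of_neg (by linarith)]
        linarith [(by ring : t * (a i - b i) + t * (b i - a i) = 0)]
      · rw [hu, Finset.lt_inf'_iff]
        intro i hi
        have h2 := hspmem i hi
        have h3 := hpos i
        rw [hf]
        rw [lt_div_iff₀ (by linarith)]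
        linarith [(by ring : t * (a i - b i) + t * (b i - a i) = 0)]
    · rintro ⟨hlt, htu⟩
      refine ⟨fun i => ?_, ?_⟩
      · rcases lt_trichotomy (a i) (b i) with h | h | h
        · have hi : i ∈ sm := by rw [hsm, mem_filter]; exact ⟨mem_univ _, h⟩
          have h2 : f i < t := lt_of_le_of_lt (hl ▸ Finset.le_sup' f hi) hlt
          rw [hf, div_lt_iff_of_neg (by linarith)] at h2
          linarith [(by ring : t * (a i - b i) + t * (b i - a i) = 0)]
        · rw [← h]
          simpa using ha i
        · have hi : i ∈ sp := by rw [hsp, mem_filter]; exact ⟨mem_univ _, h⟩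
          have h2 : t < f i := lt_of_lt_of_le htu (hu ▸ Finset.inf'_le f hi)
          rw [hf, lt_div_iff₀ (by linarith)] at h2
          linarith [(by ring : t * (a i - b i) + t * (b i - a i) = 0)]
      · have : ∑ i, (a i + t * (b i - a i)) = (∑ i, a i) + t * ((∑ i, b i) - ∑ i, a i) := by
          rw [Finset.sum_add_distrib, ← Finset.mul_sum, Finset.sum_sub_distrib]
        rw [this, hsa, hsb]; ring
  have hSup : sSup {t : ℝ | a + t • (b - a) ∈ stdOpenSimplex (k+1)} = u := by
    rw [hset]; exact csSup_Ioo hlu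
  have hInf : sInf {t : ℝ | a + t • (b - a) ∈ stdOpenSimplex (k+1)} = l := by
    rw [hset]; exact csInf_Ioo hlu
  simp only [hilbertDist]
  rw [if_neg hab, hSup, hInf]
  obtain ⟨i0, hi0mem, hi0⟩ := Finset.exists_mem_eq_inf' hspne f
  obtain ⟨j0, hj0mem, hj0⟩ := Finset.exists_mem_eq_sup' hsmne f
  have hi0' : b i0 < a i0 := hspmem i0 hi0mem
  have hj0' : a j0 < b j0 := hsmmem j0 hj0mem
  have hd1 : a i0 - b i0 ≠ 0 := by linarith
  have hd2 : a j0 - b j0 ≠ 0 := by linarith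
  have hratio : u * (1 - l) / ((u - 1) * (-l)) = (a i0 / b i0) * (b j0 / a j0) := by
    rw [hu, hi0, hl, hj0, hf]
    have h3 : b i0 ≠ 0 := ne_of_gt (hb i0)
    have h4 : a j0 ≠ 0 := ne_of_gt (ha j0)
    have e1 : a i0 / (a i0 - b i0) - 1 = b i0 / (a i0 - b i0) := by field_simp; ring
    have e2 : 1 - a j0 / (a j0 - b j0) = (-b j0) / (a j0 - b j0) := by field_simp; ring
    have e3 : -(a j0 / (a j0 - b j0)) = (-a j0) / (a j0 - b j0) := by ring
    rw [e1, e2, e3]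
    rw [div_mul_div_comm, div_mul_div_comm,
      div_div_div_cancel_right₀ (mul_ne_zero hd1 hd2)]
    field_simp
  rw [hratio]
  have hMa : (Finset.univ.sup' Finset.univ_nonempty fun p => a p / b p) = a i0 / b i0 := by
    apply le_antisymm
    · apply Finset.sup'_le
      intro i _
      rcases le_or_gt (a i) (b i) with h | h
      · have h1 : a i / b i ≤ 1 := div_le_one_of_le₀ h (le_of_lt (hb i))
        have h2 : 1 < a i0 / b i0 := (one_lt_div (hb i0)).mpr hi0'
        linarith
      · have hi : i ∈ sp := by rw [hsp, mem_filter]; exact ⟨mem_univ _, h⟩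
        have hle : f i0 ≤ f i := hi0 ▸ Finset.inf'_le f hi
        simp only [hf] at hle
        rw [div_le_div_iff₀ (by linarith) (by linarith)] at hle
        rw [div_le_div_iff₀ (hb i) (hb i0)]
        nlinarith
    · exact Finset.le_sup' (fun p => a p / b p) (Finset.mem_univ i0)
  have hMb : (Finset.univ.sup' Finset.univ_nonempty fun p => b p / a p) = b j0 / a j0 := by
    apply le_antisymm
    · apply Finset.sup'_le
      intro i _
      rcases le_or_gt (b i) (a i) with h | h
      · have h1 : b i / a i ≤ 1 := div_le_one_of_le₀ h (le_of_lt (ha i))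
        have h2 : 1 < b j0 / a j0 := (one_lt_div (ha j0)).mpr hj0'
        linarith
      · have hi : i ∈ sm := by rw [hsm, mem_filter]; exact ⟨mem_univ _, h⟩
        have hle : f i ≤ f j0 := hj0 ▸ Finset.le_sup' f hi
        simp only [hf] at hle
        rw [show a i - b i = -(b i - a i) by ring, div_neg,
          show a j0 - b j0 = -(b j0 - a j0) by ring, div_neg, neg_le_neg_iff,
          div_le_div_iff₀ (by linarith) (by linarith)] at hle
        rw [div_le_div_iff₀ (ha i) (ha j0)]
        nlinarith
    · exact Finset.le_sup' (fun p => b p / a p) (Finset.mem_univ j0)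
  rw [← hMa, ← hMb]
  have hMapos : 0 < Finset.univ.sup' Finset.univ_nonempty fun p => a p / b p := by
    rw [hMa]; exact div_pos (ha i0) (hb i0)
  have hMbpos : 0 < Finset.univ.sup' Finset.univ_nonempty fun p => b p / a p := by
    rw [hMb]; exact div_pos (hb j0) (ha j0)
  rw [Real.log_mul (ne_of_gt hMapos) (ne_of_gt hMbpos)]
  rw [myLog_sup' _ (fun i => div_pos (ha i) (hb i)),
    myLog_sup' _ (fun i => div_pos (hb i) (ha i))]
  congr 1
  congr 1
  · exact Finset.sup'_congr _ rfl fun i _ =>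
      Real.log_div (ne_of_gt (ha i)) (ne_of_gt (hb i))
  · exact Finset.sup'_congr _ rfl fun i _ =>
      Real.log_div (ne_of_gt (hb i)) (ne_of_gt (ha i))


lemma myQuasiSelf (k : ℕ) (v : Fin k → ℝ) : quasiEuclidDist k v v = 0 := by
  unfold quasiEuclidDist
  simp only [sub_self, abs_zero, myiSup_zero]
  norm_num

/-- The map `Φ` is an isometry of the standard open `k`-simplex with
its Hilbert metric onto `(ℝ^k, d)`, where `d` is `quasiEuclidDist`; moreover `d` is
bi-Lipschitz equivalent to the Euclidean metric.  Consequently `(S, H_S)` is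
quasi-isometric to Euclidean `k`-space. -/
theorem stmt_1 (k : ℕ) :
    (∀ x y : Fin (k + 1) → ℝ, (∀ i, 0 < x i) → (∀ i, 0 < y i) →
      hilbertDist (stdOpenSimplex (k + 1)) ((∑ i, x i)⁻¹ • x) ((∑ i, y i)⁻¹ • y) =
        quasiEuclidDist k (simplexLogChart k x) (simplexLogChart k y)) ∧
    (∀ v : Fin k → ℝ, ∃ x : Fin (k + 1) → ℝ, (∀ i, 0 < x i) ∧ simplexLogChart k x = v) ∧
    (∃ c C : ℝ, 0 < c ∧ 0 < C ∧ ∀ v w : Fin k → ℝ,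
      c * Real.sqrt (∑ i, (v i - w i) ^ 2) ≤ quasiEuclidDist k v w ∧
      quasiEuclidDist k v w ≤ C * Real.sqrt (∑ i, (v i - w i) ^ 2)) := by
  refine ⟨?_, ?_, ?_⟩
  · intro x y hx hy
    set X := ∑ i, x i with hX
    set Y := ∑ i, y i with hY
    have hX0 : 0 < X := Finset.sum_pos (fun i _ => hx i) Finset.univ_nonempty
    have hY0 : 0 < Y := Finset.sum_pos (fun i _ => hy i) Finset.univ_nonempty
    set a : Fin (k+1) → ℝ := X⁻¹ • x with hadef
    set b : Fin (k+1) → ℝ := Y⁻¹ • y with hbdef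
    have haap : ∀ p, a p = X⁻¹ * x p := fun p => rfl
    have hbap : ∀ p, b p = Y⁻¹ * y p := fun p => rfl
    have hapos : ∀ p, 0 < a p := fun p => mul_pos (inv_pos.mpr hX0) (hx p)
    have hbpos : ∀ p, 0 < b p := fun p => mul_pos (inv_pos.mpr hY0) (hy p)
    have hsa : ∑ p, a p = 1 := by
      rw [Finset.sum_congr rfl fun p _ => haap p, ← Finset.mul_sum, ← hX,
        inv_mul_cancel₀ (ne_of_gt hX0)]
    have hsb : ∑ p, b p = 1 := by
      rw [Finset.sum_congr rfl fun p _ => hbap p, ← Finset.mul_sum, ← hY,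
        inv_mul_cancel₀ (ne_of_gt hY0)]
    by_cases hab : a = b
    · have hvw : simplexLogChart k x = simplexLogChart k y := by
        funext i
        simp only [simplexLogChart]
        have h1 : x i.succ / x 0 = a i.succ / a 0 := by
          rw [haap, haap, mul_div_mul_left _ _ (inv_ne_zero (ne_of_gt hX0))]
        have h2 : y i.succ / y 0 = b i.succ / b 0 := by
          rw [hbap, hbap, mul_div_mul_left _ _ (inv_ne_zero (ne_of_gt hY0))]
        rw [h1, h2, hab]
      rw [hvw]
      have hLHS : hilbertDist (stdOpenSimplex (k+1)) a b = 0 := by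
        simp only [hilbertDist]
        rw [if_pos hab]
      rw [hLHS, myQuasiSelf]
    · rw [myMainCalc k a b hapos hbpos hsa hsb hab]
      have hneg : (Finset.univ.sup' Finset.univ_nonempty
            fun p => Real.log (b p) - Real.log (a p)) =
          Finset.univ.sup' Finset.univ_nonempty
            fun p => -(Real.log (a p) - Real.log (b p)) :=
        Finset.sup'_congr _ rfl fun p _ => by ring
      rw [hneg, myComb k (fun p => Real.log (a p) - Real.log (b p))]
      have hcd : ∀ p q : Fin (k+1),
          (Real.log (a p) - Real.log (b p)) - (Real.log (a q) - Real.log (b q)) =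
            (Real.log (x p) - Real.log (x q)) - (Real.log (y p) - Real.log (y q)) := by
        intro p q
        rw [haap, haap, hbap, hbap,
          Real.log_mul (inv_ne_zero (ne_of_gt hX0)) (ne_of_gt (hx p)),
          Real.log_mul (inv_ne_zero (ne_of_gt hX0)) (ne_of_gt (hx q)),
          Real.log_mul (inv_ne_zero (ne_of_gt hY0)) (ne_of_gt (hy p)),
          Real.log_mul (inv_ne_zero (ne_of_gt hY0)) (ne_of_gt (hy q))]
        ring
      have h1 : ∀ i : Fin k, (Real.log (a i.succ) - Real.log (b i.succ)) -
          (Real.log (a 0) - Real.log (b 0)) =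
          simplexLogChart k x i - simplexLogChart k y i := by
        intro i
        simp only [simplexLogChart]
        rw [Real.log_div (ne_of_gt (hx i.succ)) (ne_of_gt (hx 0)),
          Real.log_div (ne_of_gt (hy i.succ)) (ne_of_gt (hy 0)), hcd]
      have h2 : ∀ i j : Fin k, (Real.log (a i.succ) - Real.log (b i.succ)) -
          (Real.log (a j.succ) - Real.log (b j.succ)) =
          (simplexLogChart k x i - simplexLogChart k x j) -
            (simplexLogChart k y i - simplexLogChart k y j) := by
        intro i j
        simp only [simplexLogChart]
        rw [Real.log_div (ne_of_gt (hx i.succ)) (ne_of_gt (hx 0)),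
          Real.log_div (ne_of_gt (hy i.succ)) (ne_of_gt (hy 0)),
          Real.log_div (ne_of_gt (hx j.succ)) (ne_of_gt (hx 0)),
          Real.log_div (ne_of_gt (hy j.succ)) (ne_of_gt (hy 0)), hcd]
        ring
      unfold quasiEuclidDist
      congr 1
      congr 1
      · exact iSup_congr fun i => congrArg abs (h1 i)
      · exact iSup_congr fun i => iSup_congr fun j => congrArg abs (h2 i j)
  · intro v
    refine ⟨Fin.cons 1 (fun i => Real.exp (v i)), fun i => ?_, ?_⟩
    · refine Fin.cases ?_ (fun j => ?_) i
      · rw [Fin.cons_zero]; exact one_pos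
      · rw [Fin.cons_succ]; exact Real.exp_pos _
    · funext i
      simp only [simplexLogChart, Fin.cons_succ, Fin.cons_zero, div_one, Real.log_exp]
  · refine ⟨1/(2*((k:ℝ)+1)), 1, by positivity, one_pos, fun v w => ?_⟩
    have he : 0 ≤ Real.sqrt (∑ i, (v i - w i) ^ 2) := Real.sqrt_nonneg _
    have hterm : ∀ i, |v i - w i| ≤ Real.sqrt (∑ i, (v i - w i) ^ 2) := by
      intro i
      rw [← Real.sqrt_sq_eq_abs]
      exact Real.sqrt_le_sqrt
        (Finset.single_le_sum (f := fun j => (v j - w j) ^ 2)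
          (fun j _ => sq_nonneg _) (Finset.mem_univ i))
    constructor
    · rcases isEmpty_or_nonempty (Fin k) with hke | hkn
      · have hz : ∑ i, (v i - w i) ^ 2 = 0 := by
          rw [Finset.univ_eq_empty, Finset.sum_empty]
        rw [hz, Real.sqrt_zero, mul_zero]
        unfold quasiEuclidDist
        rw [iSup_of_empty', iSup_of_empty', Real.sSup_empty]
        norm_num
      · set M := ⨆ i : Fin k, |v i - w i| with hM
        have hMle : ∀ i, |v i - w i| ≤ M := fun i =>
          le_ciSup (Finite.bddAbove_range fun i => |v i - w i|) i
        have hM0 : 0 ≤ M := le_trans (abs_nonneg _) (hMle (Classical.arbitrary _))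
        have hsum : ∑ i, (v i - w i) ^ 2 ≤ (((k:ℝ)+1) * M) ^ 2 := by
          calc ∑ i, (v i - w i) ^ 2 ≤ ∑ _i : Fin k, M ^ 2 := by
                refine Finset.sum_le_sum fun i _ => ?_
                rw [← sq_abs (v i - w i)]
                exact pow_le_pow_left₀ (abs_nonneg _) (hMle i) 2
            _ = (k:ℝ) * M ^ 2 := by
                rw [Finset.sum_const, Finset.card_univ, Fintype.card_fin, nsmul_eq_mul]
            _ ≤ (((k:ℝ)+1) * M) ^ 2 := by
                have hk0 : (0:ℝ) ≤ (k:ℝ) := Nat.cast_nonneg k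
                nlinarith [sq_nonneg M, mul_nonneg hk0 (sq_nonneg M)]
        have hsqrt : Real.sqrt (∑ i, (v i - w i) ^ 2) ≤ ((k:ℝ)+1) * M := by
          have := Real.sqrt_le_sqrt hsum
          rwa [Real.sqrt_sq (by positivity)] at this
        have hquasi : M / 2 ≤ quasiEuclidDist k v w := by
          unfold quasiEuclidDist
          have := le_max_left M
            (⨆ i : Fin k, ⨆ j : Fin k, |(v i - v j) - (w i - w j)|)
          linarith
        have hklt : (0:ℝ) < 2*((k:ℝ)+1) := by positivity
        rw [div_mul_eq_mul_div, one_mul, div_le_iff₀ hklt]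
        calc Real.sqrt (∑ i, (v i - w i) ^ 2) ≤ ((k:ℝ)+1) * M := hsqrt
          _ ≤ quasiEuclidDist k v w * (2*((k:ℝ)+1)) := by nlinarith [hquasi, hM0]
    · rw [one_mul]
      unfold quasiEuclidDist
      have hb1 : (⨆ i : Fin k, |v i - w i|) ≤ Real.sqrt (∑ i, (v i - w i) ^ 2) := by
        rcases isEmpty_or_nonempty (Fin k) with hke | hkn
        · rw [iSup_of_empty', Real.sSup_empty]; exact he
        · exact ciSup_le hterm
      have hb2 : (⨆ i : Fin k, ⨆ j : Fin k, |(v i - v j) - (w i - w j)|) ≤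
          2 * Real.sqrt (∑ i, (v i - w i) ^ 2) := by
        rcases isEmpty_or_nonempty (Fin k) with hke | hkn
        · rw [iSup_of_empty', Real.sSup_empty]; linarith
        · refine ciSup_le fun i => ciSup_le fun j => ?_
          have : (v i - v j) - (w i - w j) = (v i - w i) - (v j - w j) := by ring
          rw [this]
          calc |(v i - w i) - (v j - w j)| ≤ |v i - w i| + |v j - w j| := abs_sub _ _
            _ ≤ 2 * Real.sqrt (∑ i, (v i - w i) ^ 2) := by
                linarith [hterm i, hterm j]
      have hmax : max (⨆ i : Fin k, |v i - w i|)
          (⨆ i : Fin k, ⨆ j : Fin k, |(v i - v j) - (w i - w j)|) ≤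
          2 * Real.sqrt (∑ i, (v i - w i) ^ 2) :=
        max_le (by linarith) hb2
      linarith

end Helpers
end

section
/- Let Ω ⊂ P(ℝ^d) be a properly convex domain. If p₁,p₂,q₁,q₂ ∈ cl(Ω) satisfy F_Ω(p₁) = F_Ω(p₂) and F_Ω(q₁) = F_Ω(q₂), and the open segment (p₁,q₁) meets Ω, then the Hausdorff distance (with respect to the Hilbert metric H_Ω) between the open segments (p₁,q₁) and (p₂,q₂) satisfies H_Ω^Haus((p₁,q₁),(p₂,q₂)) ≤ H_{F_Ω(p₁)}(p₁,p₂) + H_{F_Ω(q₁)}(q₁,q₂). -/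
open Set Filter Topology

/-- The open face `F_C(x)` of a point `x` of `cl C`: `x` together with all `y ∈ cl C`
such that some open segment contained in `cl C` contains both `x` and `y`. -/
def face {E : Type*} [AddCommGroup E] [Module ℝ E] [TopologicalSpace E]
    (C : Set E) (x : E) : Set E :=
  insert x {y | y ∈ closure C ∧ ∃ a b : E, openSegment ℝ a b ⊆ closure C ∧
    x ∈ openSegment ℝ a b ∧ y ∈ openSegment ℝ a b}

/-- A properly convex domain, realized in an affine chart: open, convex, bounded, nonempty. -/
def IsProperlyConvex {E : Type*} [NormedAddCommGroup E] [NormedSpace ℝ E] (Ω : Set E) : Prop :=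
  IsOpen Ω ∧ Convex ℝ Ω ∧ Bornology.IsBounded Ω ∧ Ω.Nonempty

/-- The Hausdorff distance between two sets with respect to a distance function `d`. -/
noncomputable def hausdorffDistWith {E : Type*} (d : E → E → ℝ) (A B : Set E) : ℝ :=
  max (sSup ((fun a => sInf ((fun b => d a b) '' B)) '' A)) (sSup ((fun b => sInf ((fun a => d a b) '' A)) '' B))

/-- The open simplex with vertex set `v`: the relative interior of the convex hull
of the `v i`, i.e. all strictly positive convex combinations. -/
def simplexOf {E : Type*} [AddCommGroup E] [Module ℝ E] {p : ℕ} (v : Fin p → E) : Set E :=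
  {x | ∃ t : Fin p → ℝ, (∀ i, 0 < t i) ∧ ∑ i, t i = 1 ∧ x = ∑ i, t i • v i}

/-- A properly embedded simplex in `Ω` (in the affine chart): the open simplex on an
affinely independent vertex set, contained in `Ω`, whose closure meets `Ω` only in itself
(equivalently, the inclusion `S ↪ Ω` is proper). -/
def IsPES {E : Type*} [NormedAddCommGroup E] [NormedSpace ℝ E] (Ω S : Set E) : Prop :=
  ∃ p : ℕ, ∃ v : Fin p → E, AffineIndependent ℝ v ∧ S = simplexOf v ∧
    S ⊆ Ω ∧ closure S ∩ Ω = S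

/-- A maximal properly embedded simplex. -/
def IsMaxPES {E : Type*} [NormedAddCommGroup E] [NormedSpace ℝ E] (Ω S : Set E) : Prop :=
  IsPES Ω S ∧ ∀ S' : Set E, IsPES Ω S' → S ⊆ S' → S = S'


section helpers
variable {E : Type*} [NormedAddCommGroup E] [NormedSpace ℝ E] {Ω : Set E}

lemma combo_mem_open (hop : IsOpen Ω) (hconv : Convex ℝ Ω) {x y : E}
    (hx : x ∈ Ω) (hy : y ∈ closure Ω) {θ : ℝ} (h0 : 0 < θ) (h1 : θ < 1) :
    θ • x + (1 - θ) • y ∈ Ω := by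
  have hsub := hconv.openSegment_interior_closure_subset_interior
    (x := x) (y := y) (by rwa [hop.interior_eq]) hy
  have hmem : θ • x + (1 - θ) • y ∈ openSegment ℝ x y :=
    ⟨θ, 1 - θ, h0, by linarith, by ring, rfl⟩
  have := hsub hmem
  rwa [hop.interior_eq] at this

lemma self_mem_face (C : Set E) (x : E) : x ∈ face C x := mem_insert _ _

lemma face_subset_closure {x : E} (hx : x ∈ closure Ω) : face Ω x ⊆ closure Ω := by
  rintro y (rfl | hy)
  · exact hx
  · exact hy.1

lemma face_combo_mem (hop : IsOpen Ω) (hconv : Convex ℝ Ω)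
    {u v w : E} (hu : u ∈ closure Ω) (hw : w ∈ face Ω v)
    {s : ℝ} (hs0 : 0 < s) (hs1 : s < 1)
    (h : (1 - s) • u + s • v ∈ Ω) : (1 - s) • u + s • w ∈ Ω := by
  rcases hw with rfl | ⟨hwc, α, β, hseg, hv, hwseg⟩
  · exact h
  obtain ⟨a₀, σ₀, ha₀, hσ₀0, hab₀, hveq⟩ := hv
  obtain ⟨a₁, σ₁, ha₁, hσ₁0, hab₁, hweq⟩ := hwseg
  have hσ₀1 : σ₀ < 1 := by linarith
  have hσ₁1 : σ₁ < 1 := by linarith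
  by_cases hσ : σ₁ = σ₀
  · have : w = v := by
      rw [← hveq, ← hweq, hσ]
      match_scalars
      · linarith
      · rfl
    rw [this]; exact h
  obtain ⟨σ₂, hσ₂0, hσ₂1, hσ₂lt⟩ :
      ∃ σ₂ : ℝ, 0 < σ₂ ∧ σ₂ < 1 ∧ ((σ₁ < σ₀ ∧ σ₂ < σ₁) ∨ (σ₀ < σ₁ ∧ σ₁ < σ₂)) := by
    rcases lt_or_gt_of_ne hσ with hlt | hgt
    · exact ⟨σ₁ / 2, by linarith, by linarith, Or.inl ⟨hlt, by linarith⟩⟩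
    · exact ⟨(σ₁ + 1) / 2, by linarith, by linarith, Or.inr ⟨hgt, by linarith⟩⟩
  obtain ⟨μ, hμ0, hμ1, hc1⟩ : ∃ μ : ℝ, 0 < μ ∧ μ < 1 ∧ μ * σ₀ + (1 - μ) * σ₂ = σ₁ := by
    have hne : σ₀ - σ₂ ≠ 0 := by
      rcases hσ₂lt with ⟨h1, h2⟩ | ⟨h1, h2⟩ <;> intro hc <;> linarith
    refine ⟨(σ₁ - σ₂) / (σ₀ - σ₂), ?_, ?_, ?_⟩
    · rcases hσ₂lt with ⟨h1, h2⟩ | ⟨h1, h2⟩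
      · apply div_pos <;> linarith
      · apply div_pos_of_neg_of_neg <;> linarith
    · rcases hσ₂lt with ⟨h1, h2⟩ | ⟨h1, h2⟩
      · rw [div_lt_one (by linarith)]; linarith
      · rw [div_lt_one_of_neg (by linarith)]; linarith
    · field_simp
      ring
  have hzseg : (1 - σ₂) • α + σ₂ • β ∈ openSegment ℝ α β :=
    ⟨1 - σ₂, σ₂, by linarith, hσ₂0, by ring, rfl⟩
  have hzclo : (1 - σ₂) • α + σ₂ • β ∈ closure Ω := hseg hzseg
  have hyclo : (1 - s) • u + s • ((1 - σ₂) • α + σ₂ • β) ∈ closure Ω :=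
    (hconv.closure) hu hzclo (by linarith) (le_of_lt hs0) (by ring)
  have key : (1 - s) • u + s • w =
      μ • ((1 - s) • u + s • v) + (1 - μ) • ((1 - s) • u + s • ((1 - σ₂) • α + σ₂ • β)) := by
    rw [← hveq, ← hweq]
    have e₀ : a₀ = 1 - σ₀ := by linarith
    have e₁ : a₁ = 1 - σ₁ := by linarith
    rw [e₀, e₁]
    match_scalars
    · ring
    · linear_combination s * hc1
    · linear_combination (-s) * hc1
  rw [key]
  exact combo_mem_open hop hconv h hyclo hμ0 hμ1

lemma chord_bddAbove {S : Set E} (hS : Bornology.IsBounded S) {x d : E} (hd : d ≠ 0) :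
    BddAbove {t : ℝ | x + t • d ∈ S} ∧ BddBelow {t : ℝ | x + t • d ∈ S} := by
  obtain ⟨R, hR⟩ := isBounded_iff_forall_norm_le.1 hS
  have key : ∀ t ∈ {t : ℝ | x + t • d ∈ S}, |t| ≤ (R + ‖x‖) / ‖d‖ := by
    intro t ht
    have h1 : ‖x + t • d‖ ≤ R := hR _ ht
    have h2 : ‖t • d‖ ≤ R + ‖x‖ := by
      have he : t • d = (x + t • d) - x := by abel
      rw [he]
      exact (norm_sub_le _ _).trans (by linarith)
    rw [norm_smul, Real.norm_eq_abs] at h2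
    rw [le_div_iff₀ (norm_pos_iff.2 hd)]
    exact h2
  constructor
  · exact ⟨(R + ‖x‖) / ‖d‖, fun t ht => (abs_le.1 (key t ht)).2⟩
  · exact ⟨-((R + ‖x‖) / ‖d‖), fun t ht => (abs_le.1 (key t ht)).1⟩

/-- The chord of `Ω` through `x` (at `t = 0`) in direction `d`: if nonempty, its
`sInf`/`sSup` bracket any parameter landing in `closure Ω`. -/
lemma chord_le_of_closure (hop : IsOpen Ω) (hconv : Convex ℝ Ω)
    {x d : E} {t₀ : ℝ} (ht₀ : x + t₀ • d ∈ closure Ω)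
    (hBA : BddAbove {t : ℝ | x + t • d ∈ Ω}) (hBB : BddBelow {t : ℝ | x + t • d ∈ Ω})
    (hne : {t : ℝ | x + t • d ∈ Ω}.Nonempty) :
    sInf {t : ℝ | x + t • d ∈ Ω} ≤ t₀ ∧ t₀ ≤ sSup {t : ℝ | x + t • d ∈ Ω} := by
  set T := {t : ℝ | x + t • d ∈ Ω} with hT
  obtain ⟨t₂, ht₂⟩ := hne
  have hcombo : ∀ θ : ℝ, 0 < θ → θ < 1 → θ * t₂ + (1 - θ) * t₀ ∈ T := by
    intro θ h0 h1
    have : x + (θ * t₂ + (1 - θ) * t₀) • d = θ • (x + t₂ • d) + (1 - θ) • (x + t₀ • d) := by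
      match_scalars <;> ring
    rw [hT, mem_setOf_eq, this]
    exact combo_mem_open hop hconv ht₂ ht₀ h0 h1
  constructor
  · rcases le_or_gt t₂ t₀ with h | h
    · exact le_trans (csInf_le hBB ht₂) h
    · by_contra hc
      push_neg at hc
      have hm2 : sInf T ≤ t₂ := csInf_le hBB ht₂
      set θ : ℝ := (sInf T - t₀) / (2 * (t₂ - t₀)) with hθ
      have hθ0 : 0 < θ := div_pos (by linarith) (by linarith)
      have hθ1 : θ < 1 := by
        rw [hθ, div_lt_one (by linarith)]; linarith
      have hmem := hcombo θ hθ0 hθ1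
      have hle := csInf_le hBB hmem
      have : θ * t₂ + (1 - θ) * t₀ = t₀ + θ * (t₂ - t₀) := by ring
      rw [this, hθ] at hle
      have hne' : t₂ - t₀ ≠ 0 := by intro hz; linarith
      have h2 : t₀ + (sInf T - t₀) / (2 * (t₂ - t₀)) * (t₂ - t₀) = t₀ + (sInf T - t₀) / 2 := by
        field_simp
      rw [h2] at hle
      linarith
  · rcases le_or_gt t₀ t₂ with h | h
    · exact le_trans h (le_csSup hBA ht₂)
    · by_contra hc
      push_neg at hc
      have hm2 : t₂ ≤ sSup T := le_csSup hBA ht₂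
      set θ : ℝ := (t₀ - sSup T) / (2 * (t₀ - t₂)) with hθ
      have hθ0 : 0 < θ := div_pos (by linarith) (by linarith)
      have hθ1 : θ < 1 := by
        rw [hθ, div_lt_one (by linarith)]; linarith
      have hmem := hcombo θ hθ0 hθ1
      have hle := le_csSup hBA hmem
      have : θ * t₂ + (1 - θ) * t₀ = t₀ - θ * (t₀ - t₂) := by ring
      rw [this, hθ] at hle
      have hne' : t₀ - t₂ ≠ 0 := by intro hz; linarith
      have h2 : t₀ - (t₀ - sSup T) / (2 * (t₀ - t₂)) * (t₀ - t₂) = t₀ - (t₀ - sSup T) / 2 := by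
        field_simp
      rw [h2] at hle
      linarith

lemma hilbertDist_nonneg (hop : IsOpen Ω) (hconv : Convex ℝ Ω)
    (hbdd : Bornology.IsBounded Ω) {a b : E}
    (ha : a ∈ closure Ω) (hb : b ∈ closure Ω) : 0 ≤ hilbertDist Ω a b := by
  by_cases hab : a = b
  · rw [hilbertDist, if_pos hab]
  rw [hilbertDist, if_neg hab]
  set T := {t : ℝ | a + t • (b - a) ∈ Ω} with hT
  rcases eq_empty_or_nonempty T with hTe | hTne
  · rw [hTe, Real.sSup_empty, Real.sInf_empty]
    norm_num
  have hd : b - a ≠ 0 := sub_ne_zero.2 (Ne.symm hab)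
  obtain ⟨hBA, hBB⟩ := chord_bddAbove hbdd hd (x := a)
  have h0 : sInf T ≤ 0 ∧ (0:ℝ) ≤ sSup T := by
    apply chord_le_of_closure hop hconv _ hBA hBB hTne
    simpa using ha
  have h1 : sInf T ≤ 1 ∧ (1:ℝ) ≤ sSup T := by
    apply chord_le_of_closure hop hconv _ hBA hBB hTne
    simpa using hb
  rcases eq_or_lt_of_le h0.1 with hm | hm
  · rw [hm]
    norm_num
  rcases eq_or_lt_of_le h1.2 with hM | hM
  · rw [← hM]
    norm_num
  have hden : 0 < (sSup T - 1) * -sInf T := mul_pos (by linarith) (by linarith)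
  apply mul_nonneg (by norm_num)
  apply Real.log_nonneg
  rw [one_le_div hden]
  nlinarith

lemma face_chord_full (hbdd : Bornology.IsBounded Ω) {p₁ p₂ : E}
    (hp₁ : p₁ ∈ closure Ω) (hp₂f : p₂ ∈ face Ω p₁) (hne : p₁ ≠ p₂) :
    BddAbove {t : ℝ | p₁ + t • (p₂ - p₁) ∈ face Ω p₁} ∧
    BddBelow {t : ℝ | p₁ + t • (p₂ - p₁) ∈ face Ω p₁} ∧
    sInf {t : ℝ | p₁ + t • (p₂ - p₁) ∈ face Ω p₁} < 0 ∧
    1 < sSup {t : ℝ | p₁ + t • (p₂ - p₁) ∈ face Ω p₁} ∧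
    ∀ t : ℝ, sInf {t : ℝ | p₁ + t • (p₂ - p₁) ∈ face Ω p₁} < t →
      t < sSup {t : ℝ | p₁ + t • (p₂ - p₁) ∈ face Ω p₁} →
      p₁ + t • (p₂ - p₁) ∈ face Ω p₁ := by
  have hδ0 : p₂ - p₁ ≠ 0 := sub_ne_zero.2 (Ne.symm hne)
  set δ := p₂ - p₁ with hδ
  set T := {t : ℝ | p₁ + t • δ ∈ face Ω p₁} with hT
  have hfb : Bornology.IsBounded (face Ω p₁) := (hbdd.closure).subset (face_subset_closure hp₁)
  obtain ⟨hBA, hBB⟩ := chord_bddAbove hfb hδ0 (x := p₁)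
  have h0T : (0:ℝ) ∈ T := by
    have : p₁ + (0:ℝ) • δ = p₁ := by simp
    simp only [hT, mem_setOf_eq, this]
    exact self_mem_face Ω p₁
  have h1T : (1:ℝ) ∈ T := by
    have : p₁ + (1:ℝ) • δ = p₂ := by rw [hδ]; simp
    simp only [hT, mem_setOf_eq, this]
    exact hp₂f
  have hTne : T.Nonempty := ⟨0, h0T⟩
  -- filling lemma: from a member τ ≠ 0, all parameters between 0 and τ are in T
  have hfill : ∀ τ : ℝ, τ ∈ T → τ ≠ 0 → ∀ t : ℝ, 0 ≤ t / τ → t / τ ≤ 1 → t ∈ T := by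
    intro τ hτ hτ0 t hθ0 hθ1
    have hzf : p₁ + τ • δ ∈ face Ω p₁ := hτ
    have hzne : p₁ + τ • δ ≠ p₁ := by
      intro hc
      have h2 : τ • δ = 0 := by
        have := congrArg (· - p₁) hc
        simpa using this
      rcases smul_eq_zero.1 h2 with h | h
      · exact hτ0 h
      · exact hδ0 h
    rcases hzf with heq | ⟨hzc, α, β, hseg, hp₁s, hzs⟩
    · exact absurd heq hzne
    have hkey : p₁ + t • δ = (t / τ) • (p₁ + τ • δ) + (1 - t / τ) • p₁ := by
      match_scalars <;> field_simp <;> try ring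
    have hmem : p₁ + t • δ ∈ openSegment ℝ α β := by
      rw [hkey]
      exact (convex_openSegment (𝕜 := ℝ) α β) hzs hp₁s hθ0 (by linarith) (by ring)
    exact Or.inr ⟨hseg hmem, α, β, hseg, hp₁s, hmem⟩
  -- explicit members beyond 0 and 1, using the witness segment for p₂
  rcases hp₂f with heq | ⟨hp₂c, α, β, hseg, hp₁s, hp₂s⟩
  · exact absurd heq.symm hne
  obtain ⟨a₀, σ₀, ha₀, hσ₀0, hab₀, hveq⟩ := hp₁s
  obtain ⟨a₁, σ₁, ha₁, hσ₁0, hab₁, hweq⟩ := hp₂s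
  have hσ₀1 : σ₀ < 1 := by linarith
  have hσ₁1 : σ₁ < 1 := by linarith
  have hcne : σ₁ - σ₀ ≠ 0 := by
    intro hc
    apply hne
    have e₀ : a₀ = 1 - σ₀ := by linarith
    have e₁ : a₁ = 1 - σ₁ := by linarith
    rw [← hveq, ← hweq, e₀, e₁]
    have hσeq : σ₁ = σ₀ := by linarith
    rw [hσeq]
    try module
  have hgen : ∀ t : ℝ, 0 < σ₀ + t * (σ₁ - σ₀) → σ₀ + t * (σ₁ - σ₀) < 1 → t ∈ T := by
    intro t h1 h2
    have e₀ : a₀ = 1 - σ₀ := by linarith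
    have e₁ : a₁ = 1 - σ₁ := by linarith
    have hkey : p₁ + t • δ =
        (1 - (σ₀ + t * (σ₁ - σ₀))) • α + (σ₀ + t * (σ₁ - σ₀)) • β := by
      rw [hδ, ← hveq, ← hweq, e₀, e₁]
      match_scalars <;> ring
    have hmem : p₁ + t • δ ∈ openSegment ℝ α β :=
      ⟨1 - (σ₀ + t * (σ₁ - σ₀)), σ₀ + t * (σ₁ - σ₀), by linarith, h1, by ring, hkey.symm⟩
    exact Or.inr ⟨hseg hmem, α, β, hseg, ⟨a₀, σ₀, ha₀, hσ₀0, hab₀, hveq⟩, hmem⟩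
  have hInf0 : sInf T < 0 := by
    rcases lt_or_gt_of_ne hcne with hlt | hgt
    · -- σ₁ < σ₀, c < 0
      have hm : ((1 - σ₀) / (2 * (σ₁ - σ₀))) ∈ T := by
        apply hgen
        · have : σ₀ + (1 - σ₀) / (2 * (σ₁ - σ₀)) * (σ₁ - σ₀) = σ₀ + (1 - σ₀) / 2 := by
            field_simp
          rw [this]; linarith
        · have : σ₀ + (1 - σ₀) / (2 * (σ₁ - σ₀)) * (σ₁ - σ₀) = σ₀ + (1 - σ₀) / 2 := by
            field_simp
          rw [this]; linarith
      have hneg : (1 - σ₀) / (2 * (σ₁ - σ₀)) < 0 :=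
        div_neg_of_pos_of_neg (by linarith) (by linarith)
      exact lt_of_le_of_lt (csInf_le hBB hm) hneg
    · -- σ₀ < σ₁, c > 0
      have hm : (-σ₀ / (2 * (σ₁ - σ₀))) ∈ T := by
        apply hgen
        · have : σ₀ + -σ₀ / (2 * (σ₁ - σ₀)) * (σ₁ - σ₀) = σ₀ - σ₀ / 2 := by
            field_simp
            ring
          rw [this]; linarith
        · have : σ₀ + -σ₀ / (2 * (σ₁ - σ₀)) * (σ₁ - σ₀) = σ₀ - σ₀ / 2 := by
            field_simp
            ring
          rw [this]; linarith
      have hneg : -σ₀ / (2 * (σ₁ - σ₀)) < 0 :=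
        div_neg_of_neg_of_pos (by linarith) (by linarith)
      exact lt_of_le_of_lt (csInf_le hBB hm) hneg
  have hSup1 : 1 < sSup T := by
    rcases lt_or_gt_of_ne hcne with hlt | hgt
    · -- c < 0
      have hm : (1 + -σ₁ / (2 * (σ₁ - σ₀))) ∈ T := by
        apply hgen
        · have : σ₀ + (1 + -σ₁ / (2 * (σ₁ - σ₀))) * (σ₁ - σ₀) = σ₁ - σ₁ / 2 := by
            field_simp
            ring
          rw [this]; linarith
        · have : σ₀ + (1 + -σ₁ / (2 * (σ₁ - σ₀))) * (σ₁ - σ₀) = σ₁ - σ₁ / 2 := by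
            field_simp
            ring
          rw [this]; linarith
      have hgt1 : 1 < 1 + -σ₁ / (2 * (σ₁ - σ₀)) := by
        have : 0 < -σ₁ / (2 * (σ₁ - σ₀)) := div_pos_of_neg_of_neg (by linarith) (by linarith)
        linarith
      exact lt_of_lt_of_le hgt1 (le_csSup hBA hm)
    · -- c > 0
      have hm : (1 + (1 - σ₁) / (2 * (σ₁ - σ₀))) ∈ T := by
        apply hgen
        · have : σ₀ + (1 + (1 - σ₁) / (2 * (σ₁ - σ₀))) * (σ₁ - σ₀) = σ₁ + (1 - σ₁) / 2 := by
            field_simp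
            ring
          rw [this]; linarith
        · have : σ₀ + (1 + (1 - σ₁) / (2 * (σ₁ - σ₀))) * (σ₁ - σ₀) = σ₁ + (1 - σ₁) / 2 := by
            field_simp
            ring
          rw [this]; linarith
      have hgt1 : 1 < 1 + (1 - σ₁) / (2 * (σ₁ - σ₀)) := by
        have : 0 < (1 - σ₁) / (2 * (σ₁ - σ₀)) := div_pos (by linarith) (by linarith)
        linarith
      exact lt_of_lt_of_le hgt1 (le_csSup hBA hm)
  refine ⟨hBA, hBB, hInf0, hSup1, ?_⟩
  intro t htm htM
  rcases le_or_gt t 0 with ht | ht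
  · obtain ⟨τ, hτT, hτlt⟩ := exists_lt_of_csInf_lt hTne (lt_min htm hInf0)
    have hτ0 : τ < 0 := lt_of_lt_of_le hτlt (min_le_right _ _)
    have hτt : τ ≤ t := le_of_lt (lt_of_lt_of_le hτlt (min_le_left _ _))
    have hτne : τ ≠ 0 := ne_of_lt hτ0
    have hd1 : 0 ≤ t / τ := by
      rw [div_eq_mul_inv]
      exact mul_nonneg_of_nonpos_of_nonpos ht (inv_nonpos.2 (le_of_lt hτ0))
    have hd2 : t / τ ≤ 1 := by
      have hinv : τ⁻¹ ≤ 0 := inv_nonpos.2 (le_of_lt hτ0)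
      have h2 : t * τ⁻¹ ≤ τ * τ⁻¹ := mul_le_mul_of_nonpos_right hτt hinv
      rw [mul_inv_cancel₀ hτne] at h2
      rw [div_eq_mul_inv]
      exact h2
    exact hfill τ hτT hτne t hd1 hd2
  · obtain ⟨τ, hτT, hτgt⟩ := exists_lt_of_lt_csSup hTne (max_lt htM hSup1)
    have hτ1 : 1 < τ := lt_of_le_of_lt (le_max_right t 1) hτgt
    have hτt : t ≤ τ := le_of_lt (lt_of_le_of_lt (le_max_left t 1) hτgt)
    have hτne : τ ≠ 0 := by linarith
    have hd1 : 0 ≤ t / τ := div_nonneg (le_of_lt ht) (by linarith)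
    have hd2 : t / τ ≤ 1 := (div_le_one (by linarith)).2 hτt
    exact hfill τ hτT hτne t hd1 hd2

lemma one_le_CR {m M : ℝ} (hm : m < 0) (hM : 1 < M) :
    1 ≤ M * (1 - m) / ((M - 1) * -m) := by
  rw [one_le_div (mul_pos (by linarith) (by linarith))]
  nlinarith

lemma CR_mono {m M m' M' : ℝ} (h1 : m ≤ m') (h2 : m' < 0) (h3 : 1 < M') (h4 : M' ≤ M) :
    1 / 2 * Real.log (M * (1 - m) / ((M - 1) * -m)) ≤
      1 / 2 * Real.log (M' * (1 - m') / ((M' - 1) * -m')) := by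
  have hm : m < 0 := lt_of_le_of_lt h1 h2
  have hM : 1 < M := lt_of_lt_of_le h3 h4
  have e1 : M * (1 - m) / ((M - 1) * -m) = M / (M - 1) * ((1 - m) / -m) :=
    (div_mul_div_comm _ _ _ _).symm
  have e2 : M' * (1 - m') / ((M' - 1) * -m') = M' / (M' - 1) * ((1 - m') / -m') :=
    (div_mul_div_comm _ _ _ _).symm
  apply mul_le_mul_of_nonneg_left _ (by norm_num)
  apply Real.log_le_log
  · apply div_pos (mul_pos (by linarith) (by linarith)) (mul_pos (by linarith) (by linarith))
  rw [e1, e2]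
  have ha : M / (M - 1) ≤ M' / (M' - 1) := by
    rw [div_le_div_iff₀ (by linarith) (by linarith)]
    nlinarith
  have hb : (1 - m) / -m ≤ (1 - m') / -m' := by
    rw [div_le_div_iff₀ (by linarith) (by linarith)]
    nlinarith
  apply mul_le_mul ha hb
  · exact div_nonneg (by linarith) (by linarith)
  · exact le_of_lt (div_pos (by linarith) (by linarith))

lemma CR_add {mp Mp mq Mq : ℝ} (hmp : mp < 0) (hMp : 1 < Mp) (hmq : mq < 0) (hMq : 1 < Mq) :
    1 / 2 * Real.log (min Mp Mq * (1 - max mp mq) / ((min Mp Mq - 1) * -max mp mq)) ≤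
      1 / 2 * Real.log (Mp * (1 - mp) / ((Mp - 1) * -mp)) +
        1 / 2 * Real.log (Mq * (1 - mq) / ((Mq - 1) * -mq)) := by
  have hm0 : max mp mq < 0 := max_lt hmp hmq
  have hM0 : 1 < min Mp Mq := lt_min hMp hMq
  have hCRp : 0 < Mp * (1 - mp) / ((Mp - 1) * -mp) :=
    div_pos (mul_pos (by linarith) (by linarith)) (mul_pos (by linarith) (by linarith))
  have hCRq : 0 < Mq * (1 - mq) / ((Mq - 1) * -mq) :=
    div_pos (mul_pos (by linarith) (by linarith)) (mul_pos (by linarith) (by linarith))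
  have hCR0 : 0 < min Mp Mq * (1 - max mp mq) / ((min Mp Mq - 1) * -max mp mq) :=
    div_pos (mul_pos (by linarith) (by linarith)) (mul_pos (by linarith) (by linarith))
  have key : min Mp Mq * (1 - max mp mq) / ((min Mp Mq - 1) * -max mp mq) ≤
      Mp * (1 - mp) / ((Mp - 1) * -mp) * (Mq * (1 - mq) / ((Mq - 1) * -mq)) := by
    have e0 : min Mp Mq * (1 - max mp mq) / ((min Mp Mq - 1) * -max mp mq) =
        min Mp Mq / (min Mp Mq - 1) * ((1 - max mp mq) / -max mp mq) :=
      (div_mul_div_comm _ _ _ _).symm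
    have ep : Mp * (1 - mp) / ((Mp - 1) * -mp) = Mp / (Mp - 1) * ((1 - mp) / -mp) :=
      (div_mul_div_comm _ _ _ _).symm
    have eq' : Mq * (1 - mq) / ((Mq - 1) * -mq) = Mq / (Mq - 1) * ((1 - mq) / -mq) :=
      (div_mul_div_comm _ _ _ _).symm
    rw [e0, ep, eq']
    have h1p : 1 ≤ Mp / (Mp - 1) := by
      rw [one_le_div (by linarith)]; linarith
    have h1q : 1 ≤ Mq / (Mq - 1) := by
      rw [one_le_div (by linarith)]; linarith
    have h2p : 1 ≤ (1 - mp) / -mp := by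
      rw [one_le_div (by linarith)]; linarith
    have h2q : 1 ≤ (1 - mq) / -mq := by
      rw [one_le_div (by linarith)]; linarith
    have hφ : min Mp Mq / (min Mp Mq - 1) ≤ Mp / (Mp - 1) * (Mq / (Mq - 1)) := by
      rcases min_cases Mp Mq with ⟨hmin, _⟩ | ⟨hmin, _⟩ <;> rw [hmin]
      · exact le_mul_of_one_le_right (by linarith) h1q
      · exact le_mul_of_one_le_left (by linarith) h1p
    have hψ : (1 - max mp mq) / -max mp mq ≤ (1 - mp) / -mp * ((1 - mq) / -mq) := by
      rcases max_cases mp mq with ⟨hmax, _⟩ | ⟨hmax, _⟩ <;> rw [hmax]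
      · exact le_mul_of_one_le_right (by linarith) h2q
      · exact le_mul_of_one_le_left (by linarith) h2p
    calc min Mp Mq / (min Mp Mq - 1) * ((1 - max mp mq) / -max mp mq)
        ≤ Mp / (Mp - 1) * (Mq / (Mq - 1)) * ((1 - mp) / -mp * ((1 - mq) / -mq)) := by
          apply mul_le_mul hφ hψ
          · apply div_nonneg (by linarith) (by linarith)
          · positivity
      _ = Mp / (Mp - 1) * ((1 - mp) / -mp) * (Mq / (Mq - 1) * ((1 - mq) / -mq)) := by ring
  calc 1 / 2 * Real.log (min Mp Mq * (1 - max mp mq) / ((min Mp Mq - 1) * -max mp mq))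
      ≤ 1 / 2 * Real.log (Mp * (1 - mp) / ((Mp - 1) * -mp) *
          (Mq * (1 - mq) / ((Mq - 1) * -mq))) := by
        apply mul_le_mul_of_nonneg_left _ (by norm_num)
        exact Real.log_le_log hCR0 key
    _ = _ := by
        rw [Real.log_mul (ne_of_gt hCRp) (ne_of_gt hCRq)]
        ring

lemma openSegment_subset_of_meets (hop : IsOpen Ω) (hconv : Convex ℝ Ω) {x y : E}
    (hx : x ∈ closure Ω) (hy : y ∈ closure Ω)
    (hmeet : (openSegment ℝ x y ∩ Ω).Nonempty) : openSegment ℝ x y ⊆ Ω := by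
  obtain ⟨z, hzseg, hzΩ⟩ := hmeet
  obtain ⟨u₁, u₂, hu₁, hu₂, huu, hz⟩ := hzseg
  rintro w ⟨t₁, t₂, ht₁, ht₂, htt, rfl⟩
  have hu₂1 : u₂ < 1 := by linarith
  have ht₂1 : t₂ < 1 := by linarith
  rcases lt_trichotomy t₂ u₂ with h | h | h
  · have hkey : t₁ • x + t₂ • y = (t₂ / u₂) • z + (1 - t₂ / u₂) • x := by
      rw [← hz]
      have e₁ : t₁ = 1 - t₂ := by linarith
      have e₂ : u₁ = 1 - u₂ := by linarith
      rw [e₁, e₂]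
      match_scalars <;> field_simp <;> try ring
    rw [hkey]
    exact combo_mem_open hop hconv hzΩ hx (div_pos ht₂ hu₂)
      ((div_lt_one hu₂).2 h)
  · have hkey : t₁ • x + t₂ • y = z := by
      rw [← hz]
      have e₁ : t₁ = u₁ := by linarith
      rw [e₁, h]
    rw [hkey]
    exact hzΩ
  · have hu₁0 : 0 < u₁ := hu₁
    have hlt : t₁ < u₁ := by linarith
    have hkey : t₁ • x + t₂ • y = (t₁ / u₁) • z + (1 - t₁ / u₁) • y := by
      rw [← hz]
      have e₁ : t₂ = 1 - t₁ := by linarith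
      have e₂ : u₂ = 1 - u₁ := by linarith
      rw [e₁, e₂]
      match_scalars <;> field_simp <;> try ring
    rw [hkey]
    exact combo_mem_open hop hconv hzΩ hy (div_pos ht₁ hu₁0)
      ((div_lt_one hu₁0).2 hlt)

lemma core_bound (hop : IsOpen Ω) (hconv : Convex ℝ Ω) (hbdd : Bornology.IsBounded Ω)
    {p₁ p₂ q₁ q₂ : E}
    (hp₁ : p₁ ∈ closure Ω) (hq₁ : q₁ ∈ closure Ω)
    {mp Mp mq Mq : ℝ} (hmp : mp < 0) (hMp : 1 < Mp) (hmq : mq < 0) (hMq : 1 < Mq)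
    (hfullp : ∀ t : ℝ, mp < t → t < Mp → p₁ + t • (p₂ - p₁) ∈ face Ω p₁)
    (hfullq : ∀ t : ℝ, mq < t → t < Mq → q₁ + t • (q₂ - q₁) ∈ face Ω q₁)
    {s : ℝ} (hs0 : 0 < s) (hs1 : s < 1)
    (ha : (1 - s) • p₁ + s • q₁ ∈ Ω) :
    hilbertDist Ω ((1 - s) • p₁ + s • q₁) ((1 - s) • p₂ + s • q₂) ≤
      1 / 2 * Real.log (min Mp Mq * (1 - max mp mq) / ((min Mp Mq - 1) * -max mp mq)) := by
  have hm0 : max mp mq < 0 := max_lt hmp hmq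
  have hM0 : 1 < min Mp Mq := lt_min hMp hMq
  set a := (1 - s) • p₁ + s • q₁ with ha_def
  set b := (1 - s) • p₂ + s • q₂ with hb_def
  by_cases hab : a = b
  · rw [hilbertDist, if_pos hab]
    exact mul_nonneg (by norm_num) (Real.log_nonneg (one_le_CR hm0 hM0))
  have hd : b - a ≠ 0 := sub_ne_zero.2 (Ne.symm hab)
  obtain ⟨hBA, hBB⟩ := chord_bddAbove hbdd hd (x := a)
  have hsub : ∀ t : ℝ, max mp mq < t → t < min Mp Mq → t ∈ {t : ℝ | a + t • (b - a) ∈ Ω} := by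
    intro t h1 h2
    have hz : p₁ + t • (p₂ - p₁) ∈ face Ω p₁ :=
      hfullp t (lt_of_le_of_lt (le_max_left _ _) h1) (lt_of_lt_of_le h2 (min_le_left _ _))
    have hw : q₁ + t • (q₂ - q₁) ∈ face Ω q₁ :=
      hfullq t (lt_of_le_of_lt (le_max_right _ _) h1) (lt_of_lt_of_le h2 (min_le_right _ _))
    have hzc : p₁ + t • (p₂ - p₁) ∈ closure Ω := face_subset_closure hp₁ hz
    have hstep1 : (1 - s) • (p₁ + t • (p₂ - p₁)) + s • q₁ ∈ Ω := by
      have h' : (1 - (1 - s)) • q₁ + (1 - s) • p₁ ∈ Ω := by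
        rw [show (1:ℝ) - (1 - s) = s from by ring, add_comm (s • q₁)]
        exact ha
      have hres := face_combo_mem hop hconv hq₁ hz (by linarith : (0:ℝ) < 1 - s)
        (by linarith : (1:ℝ) - s < 1) h'
      rw [show (1:ℝ) - (1 - s) = s from by ring, add_comm (s • q₁)] at hres
      exact hres
    have hstep2 := face_combo_mem hop hconv hzc hw hs0 hs1 hstep1
    have hkey : a + t • (b - a) =
        (1 - s) • (p₁ + t • (p₂ - p₁)) + s • (q₁ + t • (q₂ - q₁)) := by
      rw [ha_def, hb_def]
      module
    rw [mem_setOf_eq, hkey]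
    exact hstep2
  have hm : sInf {t : ℝ | a + t • (b - a) ∈ Ω} ≤ max mp mq := by
    by_contra hc
    push_neg at hc
    obtain ⟨t, ht1, ht2⟩ := exists_between
      (lt_min hc hm0 : max mp mq < min (sInf {t : ℝ | a + t • (b - a) ∈ Ω}) 0)
    have ht0 : t < 0 := lt_of_lt_of_le ht2 (min_le_right _ _)
    have htT := hsub t ht1 (lt_trans ht0 (by linarith))
    have := csInf_le hBB htT
    have := lt_of_lt_of_le ht2 (min_le_left _ _)
    linarith
  have hM : min Mp Mq ≤ sSup {t : ℝ | a + t • (b - a) ∈ Ω} := by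
    by_contra hc
    push_neg at hc
    obtain ⟨t, ht1, ht2⟩ := exists_between
      (max_lt hc hM0 : max (sSup {t : ℝ | a + t • (b - a) ∈ Ω}) 1 < min Mp Mq)
    have ht1' : 1 < t := lt_of_le_of_lt (le_max_right _ _) ht1
    have htT := hsub t (lt_trans hm0 (by linarith)) ht2
    have := le_csSup hBA htT
    have := lt_of_le_of_lt (le_max_left _ _) ht1
    linarith
  rw [hilbertDist, if_neg hab]
  exact CR_mono hm hm0 hM0 hM

end helpers

/-- If `p₁,p₂,q₁,q₂ ∈ cl Ω` satisfy `F_Ω(p₁) = F_Ω(p₂)` and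
`F_Ω(q₁) = F_Ω(q₂)`, and the open segment `(p₁,q₁)` meets `Ω`, then the Hausdorff distance
(with respect to the Hilbert metric `H_Ω`) between the open segments `(p₁,q₁)` and `(p₂,q₂)`
is at most `H_{F_Ω(p₁)}(p₁,p₂) + H_{F_Ω(q₁)}(q₁,q₂)`. -/
theorem stmt_2 {n : ℕ} (Ω : Set (EuclideanSpace ℝ (Fin n))) (hΩ : IsProperlyConvex Ω)
    (p₁ p₂ q₁ q₂ : EuclideanSpace ℝ (Fin n))
    (hp₁ : p₁ ∈ closure Ω) (hp₂ : p₂ ∈ closure Ω)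
    (hq₁ : q₁ ∈ closure Ω) (hq₂ : q₂ ∈ closure Ω)
    (hfp : face Ω p₁ = face Ω p₂) (hfq : face Ω q₁ = face Ω q₂)
    (hmeet : (openSegment ℝ p₁ q₁ ∩ Ω).Nonempty) :
    hausdorffDistWith (hilbertDist Ω) (openSegment ℝ p₁ q₁) (openSegment ℝ p₂ q₂) ≤
      hilbertDist (face Ω p₁) p₁ p₂ + hilbertDist (face Ω q₁) q₁ q₂ := by
  obtain ⟨hop, hconv, hbdd, -⟩ := hΩ
  have hAsub : openSegment ℝ p₁ q₁ ⊆ Ω :=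
    openSegment_subset_of_meets hop hconv hp₁ hq₁ hmeet
  have hp₂f : p₂ ∈ face Ω p₁ := by rw [hfp]; exact self_mem_face Ω p₂
  have hq₂f : q₂ ∈ face Ω q₁ := by rw [hfq]; exact self_mem_face Ω q₂
  set C := hilbertDist (face Ω p₁) p₁ p₂ + hilbertDist (face Ω q₁) q₁ q₂ with hC
  have key : ∀ s : ℝ, 0 < s → s < 1 →
      hilbertDist Ω ((1 - s) • p₁ + s • q₁) ((1 - s) • p₂ + s • q₂) ≤ C := by
    intro s hs0 hs1
    have haA : (1 - s) • p₁ + s • q₁ ∈ openSegment ℝ p₁ q₁ :=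
      ⟨1 - s, s, by linarith, hs0, by ring, rfl⟩
    have ha : (1 - s) • p₁ + s • q₁ ∈ Ω := hAsub haA
    by_cases hpp : p₁ = p₂ <;> by_cases hqq : q₁ = q₂
    · have hab : (1 - s) • p₁ + s • q₁ = (1 - s) • p₂ + s • q₂ := by rw [hpp, hqq]
      rw [hilbertDist, if_pos hab, hC, hilbertDist, if_pos hpp, hilbertDist, if_pos hqq]
      norm_num
    · -- p degenerate, q not
      obtain ⟨qBA, qBB, hmq0, hMq1, hfullq⟩ := face_chord_full hbdd hq₁ hq₂f hqq
      have hfullp : ∀ t : ℝ,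
          sInf {t : ℝ | q₁ + t • (q₂ - q₁) ∈ face Ω q₁} - 1 < t →
          t < sSup {t : ℝ | q₁ + t • (q₂ - q₁) ∈ face Ω q₁} + 1 →
          p₁ + t • (p₂ - p₁) ∈ face Ω p₁ := by
        intro t _ _
        rw [← hpp, sub_self, smul_zero, add_zero]
        exact self_mem_face Ω p₁
      have hbound := core_bound hop hconv hbdd hp₁ hq₁
        (by linarith) (by linarith) hmq0 hMq1 hfullp hfullq hs0 hs1 ha
      rw [max_eq_right (by linarith : sInf {t : ℝ | q₁ + t • (q₂ - q₁) ∈ face Ω q₁} - 1 ≤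
            sInf {t : ℝ | q₁ + t • (q₂ - q₁) ∈ face Ω q₁}),
          min_eq_right (by linarith : sSup {t : ℝ | q₁ + t • (q₂ - q₁) ∈ face Ω q₁} ≤
            sSup {t : ℝ | q₁ + t • (q₂ - q₁) ∈ face Ω q₁} + 1)] at hbound
      have hHp : hilbertDist (face Ω p₁) p₁ p₂ = 0 := by rw [hilbertDist, if_pos hpp]
      have hHq : hilbertDist (face Ω q₁) q₁ q₂ =
          1 / 2 * Real.log
            (sSup {t : ℝ | q₁ + t • (q₂ - q₁) ∈ face Ω q₁} *
                (1 - sInf {t : ℝ | q₁ + t • (q₂ - q₁) ∈ face Ω q₁}) /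
              ((sSup {t : ℝ | q₁ + t • (q₂ - q₁) ∈ face Ω q₁} - 1) *
                -sInf {t : ℝ | q₁ + t • (q₂ - q₁) ∈ face Ω q₁})) := by
        rw [hilbertDist, if_neg hqq]
      rw [hC, hHp, zero_add, hHq]
      exact hbound
    · -- q degenerate, p not
      obtain ⟨pBA, pBB, hmp0, hMp1, hfullp⟩ := face_chord_full hbdd hp₁ hp₂f hpp
      have hfullq : ∀ t : ℝ,
          sInf {t : ℝ | p₁ + t • (p₂ - p₁) ∈ face Ω p₁} - 1 < t →
          t < sSup {t : ℝ | p₁ + t • (p₂ - p₁) ∈ face Ω p₁} + 1 →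
          q₁ + t • (q₂ - q₁) ∈ face Ω q₁ := by
        intro t _ _
        rw [← hqq, sub_self, smul_zero, add_zero]
        exact self_mem_face Ω q₁
      have hbound := core_bound hop hconv hbdd hp₁ hq₁
        hmp0 hMp1 (by linarith) (by linarith) hfullp hfullq hs0 hs1 ha
      rw [max_eq_left (by linarith : sInf {t : ℝ | p₁ + t • (p₂ - p₁) ∈ face Ω p₁} - 1 ≤
            sInf {t : ℝ | p₁ + t • (p₂ - p₁) ∈ face Ω p₁}),
          min_eq_left (by linarith : sSup {t : ℝ | p₁ + t • (p₂ - p₁) ∈ face Ω p₁} ≤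
            sSup {t : ℝ | p₁ + t • (p₂ - p₁) ∈ face Ω p₁} + 1)] at hbound
      have hHq : hilbertDist (face Ω q₁) q₁ q₂ = 0 := by rw [hilbertDist, if_pos hqq]
      have hHp : hilbertDist (face Ω p₁) p₁ p₂ =
          1 / 2 * Real.log
            (sSup {t : ℝ | p₁ + t • (p₂ - p₁) ∈ face Ω p₁} *
                (1 - sInf {t : ℝ | p₁ + t • (p₂ - p₁) ∈ face Ω p₁}) /
              ((sSup {t : ℝ | p₁ + t • (p₂ - p₁) ∈ face Ω p₁} - 1) *
                -sInf {t : ℝ | p₁ + t • (p₂ - p₁) ∈ face Ω p₁})) := by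
        rw [hilbertDist, if_neg hpp]
      rw [hC, hHq, add_zero, hHp]
      exact hbound
    · -- both nondegenerate
      obtain ⟨pBA, pBB, hmp0, hMp1, hfullp⟩ := face_chord_full hbdd hp₁ hp₂f hpp
      obtain ⟨qBA, qBB, hmq0, hMq1, hfullq⟩ := face_chord_full hbdd hq₁ hq₂f hqq
      have hbound := core_bound hop hconv hbdd hp₁ hq₁
        hmp0 hMp1 hmq0 hMq1 hfullp hfullq hs0 hs1 ha
      refine le_trans hbound (le_trans (CR_add hmp0 hMp1 hmq0 hMq1) ?_)
      have hHp : hilbertDist (face Ω p₁) p₁ p₂ =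
          1 / 2 * Real.log
            (sSup {t : ℝ | p₁ + t • (p₂ - p₁) ∈ face Ω p₁} *
                (1 - sInf {t : ℝ | p₁ + t • (p₂ - p₁) ∈ face Ω p₁}) /
              ((sSup {t : ℝ | p₁ + t • (p₂ - p₁) ∈ face Ω p₁} - 1) *
                -sInf {t : ℝ | p₁ + t • (p₂ - p₁) ∈ face Ω p₁})) := by
        rw [hilbertDist, if_neg hpp]
      have hHq : hilbertDist (face Ω q₁) q₁ q₂ =
          1 / 2 * Real.log
            (sSup {t : ℝ | q₁ + t • (q₂ - q₁) ∈ face Ω q₁} *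
                (1 - sInf {t : ℝ | q₁ + t • (q₂ - q₁) ∈ face Ω q₁}) /
              ((sSup {t : ℝ | q₁ + t • (q₂ - q₁) ∈ face Ω q₁} - 1) *
                -sInf {t : ℝ | q₁ + t • (q₂ - q₁) ∈ face Ω q₁})) := by
        rw [hilbertDist, if_neg hqq]
      rw [hC, hHp, hHq]
  have hC0 : 0 ≤ C := by
    have h1 : 0 ≤ hilbertDist (face Ω p₁) p₁ p₂ := by
      by_cases hpp : p₁ = p₂
      · rw [hilbertDist, if_pos hpp]
      · obtain ⟨-, -, hm0, hM1, -⟩ := face_chord_full hbdd hp₁ hp₂f hpp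
        rw [hilbertDist, if_neg hpp]
        exact mul_nonneg (by norm_num) (Real.log_nonneg (one_le_CR hm0 hM1))
    have h2 : 0 ≤ hilbertDist (face Ω q₁) q₁ q₂ := by
      by_cases hqq : q₁ = q₂
      · rw [hilbertDist, if_pos hqq]
      · obtain ⟨-, -, hm0, hM1, -⟩ := face_chord_full hbdd hq₁ hq₂f hqq
        rw [hilbertDist, if_neg hqq]
        exact mul_nonneg (by norm_num) (Real.log_nonneg (one_le_CR hm0 hM1))
    rw [hC]; linarith
  have hAclos : openSegment ℝ p₁ q₁ ⊆ closure Ω := fun x hx => subset_closure (hAsub hx)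
  have hBclos : openSegment ℝ p₂ q₂ ⊆ closure Ω := (hconv.closure).openSegment_subset hp₂ hq₂
  rw [hausdorffDistWith]
  apply max_le
  · apply Real.sSup_le _ hC0
    rintro _ ⟨x, hx, rfl⟩
    obtain ⟨u, v, hu, hv, huv, hxe⟩ := hx
    have hxe' : x = (1 - v) • p₁ + v • q₁ := by
      rw [← hxe, show u = 1 - v from by linarith]
    have hb₀B : (1 - v) • p₂ + v • q₂ ∈ openSegment ℝ p₂ q₂ :=
      ⟨1 - v, v, by linarith, hv, by ring, rfl⟩
    have hdb : hilbertDist Ω x ((1 - v) • p₂ + v • q₂) ≤ C := by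
      rw [hxe']
      exact key v hv (by linarith)
    have hxA : x ∈ openSegment ℝ p₁ q₁ := ⟨u, v, hu, hv, huv, hxe⟩
    have hlow : BddBelow ((fun b => hilbertDist Ω x b) '' openSegment ℝ p₂ q₂) := by
      refine ⟨0, ?_⟩
      rintro r ⟨y, hy, rfl⟩
      exact hilbertDist_nonneg hop hconv hbdd (hAclos hxA) (hBclos hy)
    exact le_trans (csInf_le hlow ⟨_, hb₀B, rfl⟩) hdb
  · apply Real.sSup_le _ hC0
    rintro _ ⟨y, hy, rfl⟩
    obtain ⟨u, v, hu, hv, huv, hye⟩ := hy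
    have hye' : y = (1 - v) • p₂ + v • q₂ := by
      rw [← hye, show u = 1 - v from by linarith]
    have ha₀A : (1 - v) • p₁ + v • q₁ ∈ openSegment ℝ p₁ q₁ :=
      ⟨1 - v, v, by linarith, hv, by ring, rfl⟩
    have hdb : hilbertDist Ω ((1 - v) • p₁ + v • q₁) y ≤ C := by
      rw [hye']
      exact key v hv (by linarith)
    have hyB : y ∈ openSegment ℝ p₂ q₂ := ⟨u, v, hu, hv, huv, hye⟩
    have hlow : BddBelow ((fun a => hilbertDist Ω a y) '' openSegment ℝ p₁ q₁) := by
      refine ⟨0, ?_⟩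
      rintro r ⟨x, hx, rfl⟩
      exact hilbertDist_nonneg hop hconv hbdd (hAclos hx) (hBclos hyB)
    exact le_trans (csInf_le hlow ⟨_, ha₀A, rfl⟩) hdb
end

section
/- Let Ω ⊂ P(ℝ^d) be a properly convex domain with Hilbert metric H_Ω. If x_n, y_n are sequences in Ω with x_n → x ∈ cl(Ω), y_n → y ∈ cl(Ω), and liminf_{n→∞} H_Ω(x_n, y_n) < ∞, then y lies in the open face F_Ω(x), and moreover H_{F_Ω(x)}(x,y) ≤ liminf_{n→∞} H_Ω(x_n, y_n). -/
open Set Filter Topology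

lemma ofreal_lt_toReal_aux {h : ℝ} {c : ENNReal} (hc : c ≠ ⊤)
    (hlt : ENNReal.ofReal h < c) : h ≤ c.toReal := by
  rcases le_or_gt h 0 with h0 | h0
  · exact h0.trans ENNReal.toReal_nonneg
  · have := ENNReal.toReal_mono hc hlt.le
    rwa [ENNReal.toReal_ofReal h0.le] at this

lemma ratio_eq {M m : ℝ} (hm : m < 0) (hM : 1 < M) :
    (M * (1 - m)) / ((M - 1) * (-m)) = (1 + (M - 1)⁻¹) * (1 + (-m)⁻¹) := by
  have h1 : M - 1 ≠ 0 := by linarith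
  have h2 : -m ≠ 0 := by linarith
  have h3 : m ≠ 0 := by intro h; apply h2; rw [h, neg_zero]
  field_simp
  ring

lemma ratio_pos {M m : ℝ} (hm : m < 0) (hM : 1 < M) :
    0 < (M * (1 - m)) / ((M - 1) * (-m)) := by
  apply div_pos <;> nlinarith

lemma ratio_mono {m M m' M' : ℝ} (hm' : m' ≤ m) (hm : m < 0) (hM : 1 < M) (hM' : M ≤ M') :
    (M' * (1 - m')) / ((M' - 1) * (-m')) ≤ (M * (1 - m)) / ((M - 1) * (-m)) := by
  have hmm : m' < 0 := lt_of_le_of_lt hm' hm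
  have hMM : 1 < M' := lt_of_lt_of_le hM hM'
  rw [ratio_eq hmm hMM, ratio_eq hm hM]
  have hM1 : (0:ℝ) < M - 1 := by linarith
  have hm1 : (0:ℝ) < -m := by linarith
  have hM1' : (0:ℝ) < M' - 1 := by linarith
  have hm1' : (0:ℝ) < -m' := by linarith
  have i1 : (M' - 1)⁻¹ ≤ (M - 1)⁻¹ := by apply inv_anti₀ hM1; linarith
  have i2 : (-m')⁻¹ ≤ (-m)⁻¹ := by apply inv_anti₀ hm1; linarith
  have p1 : 0 < (M' - 1)⁻¹ := by positivity
  have p2 : 0 < (-m')⁻¹ := by positivity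
  apply mul_le_mul (by linarith) (by linarith) (by linarith) (by positivity)

lemma comb_eq {E : Type*} [AddCommGroup E] [Module ℝ E] (xl v : E) (p q m M : ℝ)
    (hpq : p + q = 1) :
    p • (xl + m • v) + q • (xl + M • v) = xl + (p*m + q*M) • v := by
  have hx : p • xl + q • xl = xl := by rw [← add_smul, hpq, one_smul]
  calc p • (xl + m • v) + q • (xl + M • v)
      = (p • xl + q • xl) + ((p*m) • v + (q*M) • v) := by
        rw [smul_add, smul_add, smul_smul, smul_smul]; abel
    _ = xl + (p*m + q*M) • v := by rw [hx, add_smul]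

lemma mem_openSegment_of_Ioo {E : Type*} [AddCommGroup E] [Module ℝ E] (xl v : E)
    {m M t : ℝ} (ht : t ∈ Ioo m M) :
    xl + t • v ∈ openSegment ℝ (xl + m • v) (xl + M • v) := by
  obtain ⟨h1, h2⟩ := ht
  have hD : 0 < M - m := by linarith
  have hMt : 0 < M - t := by linarith
  have htm : 0 < t - m := by linarith
  refine ⟨(M - t)/(M - m), (t - m)/(M - m), by positivity, by positivity, ?_, ?_⟩
  · field_simp; ring
  · rw [comb_eq]
    · congr 2
      field_simp
      ring
    · field_simp; ring

lemma openSegment_mem_Ioo {E : Type*} [AddCommGroup E] [Module ℝ E] (xl v : E)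
    {m M : ℝ} (hmM : m < M) {z : E}
    (hz : z ∈ openSegment ℝ (xl + m • v) (xl + M • v)) :
    ∃ t ∈ Ioo m M, z = xl + t • v := by
  obtain ⟨p, q, hp, hq, hpq, rfl⟩ := hz
  have e1 : p*m + q*m = m := by linear_combination m * hpq
  have e2 : p*M + q*M = M := by linear_combination M * hpq
  refine ⟨p*m + q*M, ⟨?_, ?_⟩, (comb_eq xl v p q m M hpq)⟩
  · nlinarith [mul_pos hq (sub_pos.mpr hmM)]
  · nlinarith [mul_pos hp (sub_pos.mpr hmM)]

lemma chord_facts {E : Type*} [NormedAddCommGroup E] [NormedSpace ℝ E] {Ω : Set E}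
    (hopen : IsOpen Ω) (hconv : Convex ℝ Ω) {R : ℝ} (hR : Ω ⊆ Metric.closedBall 0 R)
    {a b : E} (ha : a ∈ Ω) (hb : b ∈ Ω) (hab : a ≠ b)
    (S : Set ℝ) (hS : S = {t : ℝ | a + t • (b - a) ∈ Ω}) :
    sInf S < 0 ∧ 1 < sSup S ∧ -(2*R/‖b-a‖) ≤ sInf S ∧ sSup S ≤ 2*R/‖b-a‖ ∧
      (∀ t, sInf S < t → t < sSup S → a + t • (b - a) ∈ Ω) := by
  have hd : 0 < ‖b - a‖ := by rw [norm_pos_iff, sub_ne_zero]; exact hab.symm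
  have h0 : (0:ℝ) ∈ S := by simp [hS, ha]
  have h1 : (1:ℝ) ∈ S := by simp [hS, hb]
  have hbound : ∀ t ∈ S, |t| ≤ 2*R/‖b-a‖ := by
    intro t ht
    rw [hS, mem_setOf_eq] at ht
    have hna : ‖a‖ ≤ R := mem_closedBall_zero_iff.mp (hR ha)
    have hn : ‖a + t • (b - a)‖ ≤ R := mem_closedBall_zero_iff.mp (hR ht)
    have key : |t| * ‖b - a‖ ≤ 2*R := by
      calc |t| * ‖b - a‖ = ‖t • (b - a)‖ := by rw [norm_smul, Real.norm_eq_abs]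
        _ = ‖(a + t • (b - a)) - a‖ := by rw [add_sub_cancel_left]
        _ ≤ ‖a + t • (b - a)‖ + ‖a‖ := norm_sub_le _ _
        _ ≤ 2*R := by linarith
    exact (le_div_iff₀ hd).mpr key
  have hbdda : BddAbove S := ⟨2*R/‖b-a‖, fun t ht => (abs_le.mp (hbound t ht)).2⟩
  have hbddb : BddBelow S := ⟨-(2*R/‖b-a‖), fun t ht => (abs_le.mp (hbound t ht)).1⟩
  have hneS : S.Nonempty := ⟨0, h0⟩
  have hSopen : IsOpen S := by
    rw [hS]
    exact hopen.preimage (continuous_const.add (continuous_id.smul continuous_const))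
  have hSconv : Convex ℝ S := by
    have heq : S = (AffineMap.lineMap a b : ℝ →ᵃ[ℝ] E) ⁻¹' Ω := by
      rw [hS]; ext t
      simp only [mem_setOf_eq, mem_preimage, AffineMap.lineMap_apply, vsub_eq_sub, vadd_eq_add]
      rw [add_comm]
    rw [heq]
    exact hconv.affine_preimage _
  obtain ⟨ε0, hε0, hball0⟩ := Metric.isOpen_iff.mp hSopen 0 h0
  obtain ⟨ε1, hε1, hball1⟩ := Metric.isOpen_iff.mp hSopen 1 h1
  have hm0 : sInf S < 0 := by
    have hmem : -(ε0/2) ∈ S := by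
      apply hball0
      simp only [Metric.mem_ball, Real.dist_eq, sub_zero, abs_neg]
      rw [abs_of_nonneg (by linarith)]; linarith
    calc sInf S ≤ -(ε0/2) := csInf_le hbddb hmem
      _ < 0 := by linarith
  have hM1 : 1 < sSup S := by
    have hmem : 1 + ε1/2 ∈ S := by
      apply hball1
      simp only [Metric.mem_ball, Real.dist_eq, add_sub_cancel_left]
      rw [abs_of_nonneg (by linarith)]; linarith
    calc (1:ℝ) < 1 + ε1/2 := by linarith
      _ ≤ sSup S := le_csSup hbdda hmem
  refine ⟨hm0, hM1, le_csInf hneS (fun t ht => (abs_le.mp (hbound t ht)).1),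
    csSup_le hneS (fun t ht => (abs_le.mp (hbound t ht)).2), ?_⟩
  intro t htm htM
  obtain ⟨u, hu, hut⟩ := exists_lt_of_csInf_lt hneS htm
  obtain ⟨w, hw, htw⟩ := exists_lt_of_lt_csSup hneS htM
  have := hSconv.ordConnected.out hu hw ⟨hut.le, htw.le⟩
  rw [hS] at this
  exact this

lemma faceB {E : Type*} [NormedAddCommGroup E] [NormedSpace ℝ E] {Ω : Set E}
    (hbdd : Bornology.IsBounded Ω) {xl yl : E} (hne : xl ≠ yl) {m M : ℝ}
    (hm : m < 0) (hM : 1 < M)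
    (hseg : ∀ t ∈ Ioo m M, xl + t • (yl - xl) ∈ closure Ω) :
    yl ∈ face Ω xl ∧
      hilbertDist (face Ω xl) xl yl ≤ (1/2) * Real.log ((M * (1 - m)) / ((M - 1) * (-m))) := by
  have hmM : m < M := by linarith
  have hv : yl - xl ≠ 0 := sub_ne_zero.mpr (Ne.symm hne)
  have hd : 0 < ‖yl - xl‖ := norm_pos_iff.mpr hv
  have h0mem : (0:ℝ) ∈ Ioo m M := ⟨hm, by linarith⟩
  have h1mem : (1:ℝ) ∈ Ioo m M := ⟨by linarith, hM⟩
  have hxlcl : xl ∈ closure Ω := by simpa using hseg 0 h0mem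
  have hylcl : yl ∈ closure Ω := by simpa using hseg 1 h1mem
  set v : E := yl - xl with hvdef
  set a : E := xl + m • v with hadef
  set b : E := xl + M • v with hbdef
  have hsub : openSegment ℝ a b ⊆ closure Ω := by
    intro z hz
    obtain ⟨t, ht, rfl⟩ := openSegment_mem_Ioo xl v hmM hz
    exact hseg t ht
  have hxlseg : xl ∈ openSegment ℝ a b := by
    simpa using mem_openSegment_of_Ioo xl v h0mem
  have hmemface : ∀ t ∈ Ioo m M, xl + t • v ∈ face Ω xl := by
    intro t ht
    exact Set.mem_insert_iff.mpr (Or.inr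
      ⟨hseg t ht, a, b, hsub, hxlseg, mem_openSegment_of_Ioo xl v ht⟩)
  have hylface : yl ∈ face Ω xl := by
    have := hmemface 1 h1mem
    simpa [hvdef, add_sub_cancel] using this
  refine ⟨hylface, ?_⟩
  set T : Set ℝ := {t : ℝ | xl + t • (yl - xl) ∈ face Ω xl} with hTdef
  have hIooT : Ioo m M ⊆ T := fun t ht => hmemface t ht
  have hfacesub : face Ω xl ⊆ closure Ω := by
    intro z hz
    rcases Set.mem_insert_iff.mp hz with h | h
    · exact h ▸ hxlcl
    · exact h.1
  obtain ⟨R, hR⟩ := hbdd.closure.subset_closedBall 0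
  have hTbound : ∀ t ∈ T, |t| ≤ 2*R/‖v‖ := by
    intro t ht
    have hcl : xl + t • v ∈ closure Ω := hfacesub ht
    have hna : ‖xl‖ ≤ R := mem_closedBall_zero_iff.mp (hR hxlcl)
    have hn : ‖xl + t • v‖ ≤ R := mem_closedBall_zero_iff.mp (hR hcl)
    have key : |t| * ‖v‖ ≤ 2*R := by
      calc |t| * ‖v‖ = ‖t • v‖ := by rw [norm_smul, Real.norm_eq_abs]
        _ = ‖(xl + t • v) - xl‖ := by rw [add_sub_cancel_left]
        _ ≤ ‖xl + t • v‖ + ‖xl‖ := norm_sub_le _ _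
        _ ≤ 2*R := by linarith
    exact (le_div_iff₀ hd).mpr key
  have hbdda : BddAbove T := ⟨2*R/‖v‖, fun t ht => (abs_le.mp (hTbound t ht)).2⟩
  have hbddb : BddBelow T := ⟨-(2*R/‖v‖), fun t ht => (abs_le.mp (hTbound t ht)).1⟩
  have hIoone : (Ioo m M).Nonempty := nonempty_Ioo.mpr hmM
  have hinfT : sInf T ≤ m := by
    calc sInf T ≤ sInf (Ioo m M) := csInf_le_csInf hbddb hIoone hIooT
      _ = m := csInf_Ioo hmM
  have hsupT : M ≤ sSup T := by
    calc M = sSup (Ioo m M) := (csSup_Ioo hmM).symm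
      _ ≤ sSup T := csSup_le_csSup hbdda hIoone hIooT
  have heq : hilbertDist (face Ω xl) xl yl =
      (1/2) * Real.log ((sSup T * (1 - sInf T)) / ((sSup T - 1) * (-(sInf T)))) := by
    rw [hilbertDist, if_neg hne]
  rw [heq]
  have hmono := ratio_mono hinfT hm hM hsupT
  have hpos : 0 < (sSup T * (1 - sInf T)) / ((sSup T - 1) * (-(sInf T))) :=
    ratio_pos (lt_of_le_of_lt hinfT hm) (lt_of_lt_of_le hM hsupT)
  have := Real.log_le_log hpos hmono
  linarith

lemma main_aux {E : Type*} [NormedAddCommGroup E] [NormedSpace ℝ E] {Ω : Set E}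
    (hΩ : IsProperlyConvex Ω) {x y : ℕ → E} {xl yl : E}
    (hx : ∀ k, x k ∈ Ω) (hy : ∀ k, y k ∈ Ω)
    (hxl : Tendsto x atTop (𝓝 xl)) (hyl : Tendsto y atTop (𝓝 yl)) (hne : xl ≠ yl)
    {r : ℝ} (hr : ∃ᶠ k in atTop, hilbertDist Ω (x k) (y k) ≤ r) :
    yl ∈ face Ω xl ∧ hilbertDist (face Ω xl) xl yl ≤ r := by
  obtain ⟨hopen, hconv, hbdd, -⟩ := hΩ
  set δ : ℝ := ‖yl - xl‖ with hδdef
  have hδ : 0 < δ := norm_pos_iff.mpr (sub_ne_zero.mpr (Ne.symm hne))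
  have hevents : ∀ᶠ k in atTop, δ/2 < ‖y k - x k‖ :=
    ((hyl.sub hxl).norm).eventually (eventually_gt_nhds (by linarith))
  obtain ⟨φ, hφ, hφP⟩ := Filter.extraction_of_frequently_atTop (hr.and_eventually hevents)
  obtain ⟨R, hR⟩ := hbdd.subset_closedBall 0
  have hR0 : 0 ≤ R := (norm_nonneg _).trans (mem_closedBall_zero_iff.mp (hR (hx 0)))
  set C : ℝ := 4*R/δ + 1 with hCdef
  have h4R : 0 ≤ 4*R/δ := by positivity
  have hC1 : 1 ≤ C := by rw [hCdef]; linarith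
  have hC0 : 0 < C := by linarith
  -- per-index facts
  have hxyne : ∀ j, x (φ j) ≠ y (φ j) := by
    intro j h
    have := (hφP j).2
    rw [h, sub_self, norm_zero] at this
    linarith
  set m : ℕ → ℝ := fun j => sInf {t : ℝ | x (φ j) + t • (y (φ j) - x (φ j)) ∈ Ω} with hmdef
  set M : ℕ → ℝ := fun j => sSup {t : ℝ | x (φ j) + t • (y (φ j) - x (φ j)) ∈ Ω} with hMdef
  have hfacts : ∀ j, m j < 0 ∧ 1 < M j ∧
      -(2*R/‖y (φ j) - x (φ j)‖) ≤ m j ∧ M j ≤ 2*R/‖y (φ j) - x (φ j)‖ ∧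
      (∀ t, m j < t → t < M j → x (φ j) + t • (y (φ j) - x (φ j)) ∈ Ω) :=
    fun j => chord_facts hopen hconv hR (hx (φ j)) (hy (φ j)) (hxyne j) _ rfl
  have hwC : ∀ j, 2*R/‖y (φ j) - x (φ j)‖ ≤ C := by
    intro j
    have hw : δ/2 < ‖y (φ j) - x (φ j)‖ := (hφP j).2
    have hwpos : 0 < ‖y (φ j) - x (φ j)‖ := by linarith
    have : 2*R/‖y (φ j) - x (φ j)‖ ≤ 4*R/δ := by
      rw [div_le_div_iff₀ hwpos hδ]
      nlinarith
    linarith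
  have hmIcc : ∀ j, m j ∈ Icc (-C) 0 :=
    fun j => ⟨le_trans (by linarith [hwC j]) (hfacts j).2.2.1, (hfacts j).1.le⟩
  have hMIcc : ∀ j, M j ∈ Icc 1 C :=
    fun j => ⟨(hfacts j).2.1.le, le_trans (hfacts j).2.2.2.1 (hwC j)⟩
  have hdist : ∀ j, hilbertDist Ω (x (φ j)) (y (φ j)) =
      (1/2) * Real.log ((M j * (1 - m j)) / ((M j - 1) * (-(m j)))) := by
    intro j
    rw [hilbertDist, if_neg (hxyne j)]
  have hle : ∀ j, (1/2) * Real.log ((M j * (1 - m j)) / ((M j - 1) * (-(m j)))) ≤ r := by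
    intro j
    rw [← hdist j]
    exact (hφP j).1
  -- compactness
  have hK : IsCompact ((Icc (-C) 0) ×ˢ (Icc (1:ℝ) C)) := isCompact_Icc.prod isCompact_Icc
  obtain ⟨⟨mI, MI⟩, hmemK, ψ, hψ, hψlim⟩ :=
    hK.tendsto_subseq (x := fun j => (m j, M j)) (fun j => ⟨hmIcc j, hMIcc j⟩)
  have h1 : Tendsto (fun j => m (ψ j)) atTop (𝓝 mI) :=
    (continuous_fst.tendsto (mI, MI)).comp hψlim
  have h2 : Tendsto (fun j => M (ψ j)) atTop (𝓝 MI) :=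
    (continuous_snd.tendsto (mI, MI)).comp hψlim
  have hm0 : mI ≤ 0 := hmemK.1.2
  have hM1 : 1 ≤ MI := hmemK.2.1
  set E2 : ℝ := Real.exp (2*r) with hE2def
  have hE2pos : 0 < E2 := Real.exp_pos _
  have hAle : ∀ j, (M j * (1 - m j)) / ((M j - 1) * (-(m j))) ≤ E2 := by
    intro j
    have hpos : 0 < (M j * (1 - m j)) / ((M j - 1) * (-(m j))) :=
      ratio_pos (hfacts j).1 (hfacts j).2.1
    have := hle j
    exact (Real.log_le_iff_le_exp hpos).mp (by linarith)
  set ε : ℝ := 1/(C*(E2+1)) with hεdef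
  have hεpos : 0 < ε := by positivity
  have hkey : ∀ j, C * (-(m (ψ j))) < 1/(E2+1) → False := by
    intro j hlt
    have hf := hfacts (ψ j)
    have hmj : m (ψ j) < 0 := hf.1
    have hMj : 1 < M (ψ j) := hf.2.1
    have hMjC : M (ψ j) ≤ C := (hMIcc (ψ j)).2
    have hd : 0 < (M (ψ j) - 1) * (-(m (ψ j))) := mul_pos (by linarith) (by linarith)
    have hlow : 1/(C * (-(m (ψ j)))) ≤
        (M (ψ j) * (1 - m (ψ j))) / ((M (ψ j) - 1) * (-(m (ψ j)))) := by
      apply div_le_div₀ (by nlinarith) (by nlinarith) hd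
      apply mul_le_mul_of_nonneg_right (by linarith) (by linarith)
    have hCm : 0 < C * (-(m (ψ j))) := mul_pos hC0 (by linarith)
    have hgt : E2 + 1 < 1/(C * (-(m (ψ j)))) := by
      rw [lt_div_iff₀ hCm]
      have h' := (lt_div_iff₀ (by positivity : (0:ℝ) < E2+1)).mp hlt
      rw [mul_comm]
      exact h'
    have := hAle (ψ j)
    linarith
  have hmI : mI < 0 := by
    rcases lt_or_eq_of_le hm0 with h | h
    · exact h
    · exfalso
      have hev : ∀ᶠ j in atTop, -ε < m (ψ j) :=
        h1.eventually (eventually_gt_nhds (by rw [h]; linarith))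
      obtain ⟨j, hj⟩ := hev.exists
      apply hkey j
      have : -(m (ψ j)) < ε := by linarith
      calc C * (-(m (ψ j))) < C * ε := by
            exact mul_lt_mul_of_pos_left this hC0
        _ = 1/(E2+1) := by rw [hεdef]; field_simp
  have hkey2 : ∀ j, (M (ψ j) - 1) * C < 1/(E2+1) → False := by
    intro j hlt
    have hf := hfacts (ψ j)
    have hmj : m (ψ j) < 0 := hf.1
    have hMj : 1 < M (ψ j) := hf.2.1
    have hmjC : -C ≤ m (ψ j) := (hmIcc (ψ j)).1
    have hd : 0 < (M (ψ j) - 1) * (-(m (ψ j))) := mul_pos (by linarith) (by linarith)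
    have hlow : 1/((M (ψ j) - 1) * C) ≤
        (M (ψ j) * (1 - m (ψ j))) / ((M (ψ j) - 1) * (-(m (ψ j)))) := by
      apply div_le_div₀ (by nlinarith) (by nlinarith) hd
      apply mul_le_mul_of_nonneg_left (by linarith) (by linarith)
    have hCm : 0 < (M (ψ j) - 1) * C := mul_pos (by linarith) hC0
    have hgt : E2 + 1 < 1/((M (ψ j) - 1) * C) := by
      rw [lt_div_iff₀ hCm]
      have h' := (lt_div_iff₀ (by positivity : (0:ℝ) < E2+1)).mp hlt
      rw [mul_comm]
      exact h'
    have := hAle (ψ j)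
    linarith
  have hMI : 1 < MI := by
    rcases lt_or_eq_of_le hM1 with h | h
    · exact h
    · exfalso
      have hev : ∀ᶠ j in atTop, M (ψ j) < 1 + ε/C :=
        h2.eventually (eventually_lt_nhds (by rw [← h]; have := div_pos hεpos hC0; linarith))
      obtain ⟨j, hj⟩ := hev.exists
      apply hkey2 j
      have : M (ψ j) - 1 < ε/C := by linarith
      calc (M (ψ j) - 1) * C < (ε/C) * C := by
            exact mul_lt_mul_of_pos_right this hC0
        _ = ε := div_mul_cancel₀ _ hC0.ne'
        _ ≤ 1/(E2+1) := by
            rw [hεdef]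
            apply one_div_le_one_div_of_le (by positivity)
            nlinarith
  -- limit of the cross ratio
  have hdenne : ((MI - 1) * (-mI)) ≠ 0 := (mul_pos (by linarith) (by linarith)).ne'
  have hAlim : Tendsto (fun j => (M (ψ j) * (1 - m (ψ j))) / ((M (ψ j) - 1) * (-(m (ψ j)))))
      atTop (𝓝 ((MI * (1 - mI)) / ((MI - 1) * (-mI)))) :=
    Tendsto.div (h2.mul (tendsto_const_nhds.sub h1)) ((h2.sub tendsto_const_nhds).mul h1.neg)
      hdenne
  have hAIpos : 0 < (MI * (1 - mI)) / ((MI - 1) * (-mI)) := ratio_pos hmI hMI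
  have hloglim : Tendsto
      (fun j => (1/2) * Real.log ((M (ψ j) * (1 - m (ψ j))) / ((M (ψ j) - 1) * (-(m (ψ j))))))
      atTop (𝓝 ((1/2) * Real.log ((MI * (1 - mI)) / ((MI - 1) * (-mI))))) :=
    Tendsto.const_mul _ (((Real.continuousAt_log hAIpos.ne').tendsto).comp hAlim)
  have hg : (1/2) * Real.log ((MI * (1 - mI)) / ((MI - 1) * (-mI))) ≤ r :=
    le_of_tendsto hloglim (Filter.Eventually.of_forall (fun j => hle (ψ j)))
  -- the segment lies in the closure
  have hσ : Tendsto (fun j => φ (ψ j)) atTop atTop := (hφ.comp hψ).tendsto_atTop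
  have hseg : ∀ t ∈ Ioo mI MI, xl + t • (yl - xl) ∈ closure Ω := by
    intro t ht
    have hev : ∀ᶠ j in atTop, m (ψ j) < t ∧ t < M (ψ j) :=
      (h1.eventually (eventually_lt_nhds ht.1)).and (h2.eventually (eventually_gt_nhds ht.2))
    have hmemΩ : ∀ᶠ j in atTop,
        x (φ (ψ j)) + t • (y (φ (ψ j)) - x (φ (ψ j))) ∈ Ω :=
      hev.mono fun j hj => (hfacts (ψ j)).2.2.2.2 t hj.1 hj.2
    have hxc : Tendsto (fun j => x (φ (ψ j))) atTop (𝓝 xl) := hxl.comp hσ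
    have hyc : Tendsto (fun j => y (φ (ψ j))) atTop (𝓝 yl) := hyl.comp hσ
    exact mem_closure_of_tendsto (hxc.add ((hyc.sub hxc).const_smul t)) hmemΩ
  obtain ⟨hface, hdle⟩ := faceB hbdd hne hmI hMI hseg
  exact ⟨hface, le_trans hdle hg⟩

/-- If `x_n → x`, `y_n → y` are sequences in `Ω` converging to points of
`cl Ω` with `liminf H_Ω(x_n,y_n) < ∞`, then `y ∈ F_Ω(x)` and
`H_{F_Ω(x)}(x,y) ≤ liminf H_Ω(x_n,y_n)` (distances compared in `ℝ≥0∞` via `ENNReal.ofReal`). -/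
theorem stmt_3 {n : ℕ} (Ω : Set (EuclideanSpace ℝ (Fin n))) (hΩ : IsProperlyConvex Ω)
    (x y : ℕ → EuclideanSpace ℝ (Fin n)) (xl yl : EuclideanSpace ℝ (Fin n))
    (hx : ∀ k, x k ∈ Ω) (hy : ∀ k, y k ∈ Ω)
    (hxl : Tendsto x atTop (𝓝 xl)) (hyl : Tendsto y atTop (𝓝 yl))
    (hfin : Filter.liminf (fun k => ENNReal.ofReal (hilbertDist Ω (x k) (y k))) atTop < ⊤) :
    yl ∈ face Ω xl ∧
      ENNReal.ofReal (hilbertDist (face Ω xl) xl yl) ≤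
        Filter.liminf (fun k => ENNReal.ofReal (hilbertDist Ω (x k) (y k))) atTop := by
  by_cases hxy : xl = yl
  · refine ⟨Set.mem_insert_iff.mpr (Or.inl hxy.symm), ?_⟩
    have h0 : hilbertDist (face Ω xl) xl yl = 0 := by rw [hilbertDist, if_pos hxy]
    rw [h0, ENNReal.ofReal_zero]
    exact zero_le
  · constructor
    · obtain ⟨c, hc1, hc2⟩ := exists_between hfin
      have hfreq : ∃ᶠ k in atTop,
          ENNReal.ofReal (hilbertDist Ω (x k) (y k)) < c :=
        Filter.frequently_lt_of_liminf_lt (by isBoundedDefault) hc1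
      have hr1 : ∃ᶠ k in atTop, hilbertDist Ω (x k) (y k) ≤ c.toReal :=
        hfreq.mono fun k hk => ofreal_lt_toReal_aux hc2.ne hk
      exact (main_aux hΩ hx hy hxl hyl hxy hr1).1
    · by_contra hcon
      push_neg at hcon
      obtain ⟨c, hc1, hc2⟩ := exists_between hcon
      have hcne : c ≠ ⊤ := (hc2.trans ENNReal.ofReal_lt_top).ne
      have hfreq : ∃ᶠ k in atTop,
          ENNReal.ofReal (hilbertDist Ω (x k) (y k)) < c :=
        Filter.frequently_lt_of_liminf_lt (by isBoundedDefault) hc1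
      have hr1 : ∃ᶠ k in atTop, hilbertDist Ω (x k) (y k) ≤ c.toReal :=
        hfreq.mono fun k hk => ofreal_lt_toReal_aux hcne hk
      have hle := (main_aux hΩ hx hy hxl hyl hxy hr1).2
      have : ENNReal.ofReal (hilbertDist (face Ω xl) xl yl) ≤ c := by
        calc ENNReal.ofReal (hilbertDist (face Ω xl) xl yl)
            ≤ ENNReal.ofReal c.toReal := ENNReal.ofReal_le_ofReal hle
          _ = c := ENNReal.ofReal_toReal hcne
      exact absurd this (not_le.mpr hc2)
end

section
/- Let Ω ⊂ P(ℝ^d) be a properly convex domain and S ⊂ Ω a properly embedded simplex. For every x ∈ ∂S: (1) the face F_S(x) of S is properly embedded in the face F_Ω(x) of Ω, i.e., ∂F_S(x) ⊂ ∂F_Ω(x); and (2) F_S(x) = cl(S) ∩ F_Ω(x). -/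
open Set Filter Topology

section auxx

variable {E : Type*} [NormedAddCommGroup E] [NormedSpace ℝ E] {p : ℕ} {v : Fin p → E}

lemma comb_eq_s5 (v : Fin p → E) (t s : Fin p → ℝ) (a b : ℝ) :
    a • (∑ i, t i • v i) + b • (∑ i, s i • v i) = ∑ i, (a * t i + b * s i) • v i := by
  rw [Finset.smul_sum, Finset.smul_sum, ← Finset.sum_add_distrib]
  refine Finset.sum_congr rfl fun i _ => ?_
  rw [smul_smul, smul_smul, ← add_smul]

lemma line_coords (v : Fin p → E) (t s : Fin p → ℝ) (r : ℝ) :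
    (∑ i, t i • v i) + r • ((∑ i, s i • v i) - (∑ i, t i • v i)) =
      ∑ i, ((1 - r) * t i + r * s i) • v i := by
  rw [← comb_eq_s5]
  module

lemma coords_unique (hv : AffineIndependent ℝ v) {t s : Fin p → ℝ}
    (ht : ∑ i, t i = 1) (hs : ∑ i, s i = 1)
    (h : (∑ i, t i • v i) = ∑ i, s i • v i) : t = s := by
  funext i
  have h0 : ∑ i, (t i - s i) = 0 := by
    rw [Finset.sum_sub_distrib, ht, hs, sub_self]
  have h1 : ∑ i, (t i - s i) • v i = 0 := by
    simp only [sub_smul, Finset.sum_sub_distrib, h, sub_self]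
  have := affineIndependent_iff.1 hv Finset.univ (fun i => t i - s i) h0 h1 i
    (Finset.mem_univ i)
  linarith

lemma mem_openSegment_line (x u : E) {r r1 r2 : ℝ} (h1 : r1 < r) (h2 : r < r2) :
    x + r • u ∈ openSegment ℝ (x + r1 • u) (x + r2 • u) := by
  rw [openSegment_eq_image']
  have hd : (0:ℝ) < r2 - r1 := by linarith
  refine ⟨(r - r1) / (r2 - r1), ⟨div_pos (by linarith) hd, ?_⟩, ?_⟩
  · rw [div_lt_one hd]; linarith
  · show x + r1 • u + ((r - r1) / (r2 - r1)) • ((x + r2 • u) - (x + r1 • u)) = x + r • u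
    have h3 : (x + r2 • u) - (x + r1 • u) = (r2 - r1) • u := by module
    rw [h3, smul_smul, div_mul_cancel₀ _ hd.ne']
    module

lemma closure_simplexOf (hp : 0 < p) :
    closure (simplexOf v) =
      {x | ∃ t : Fin p → ℝ, (∀ i, 0 ≤ t i) ∧ ∑ i, t i = 1 ∧ x = ∑ i, t i • v i} := by
  have hφc : Continuous fun t : Fin p → ℝ => ∑ i, t i • v i :=
    continuous_finset_sum _ fun i _ => (continuous_apply i).smul continuous_const
  have himg : {x | ∃ t : Fin p → ℝ, (∀ i, 0 ≤ t i) ∧ ∑ i, t i = 1 ∧ x = ∑ i, t i • v i}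
      = (fun t : Fin p → ℝ => ∑ i, t i • v i) '' stdSimplex ℝ (Fin p) := by
    ext z
    simp only [mem_setOf_eq, mem_image, stdSimplex]
    constructor
    · rintro ⟨t, h0, h1, rfl⟩; exact ⟨t, ⟨h0, h1⟩, rfl⟩
    · rintro ⟨t, ⟨h0, h1⟩, rfl⟩; exact ⟨t, h0, h1, rfl⟩
  rw [himg]
  apply Subset.antisymm
  · apply closure_minimal
    · rintro z ⟨t, h0, h1, rfl⟩
      exact ⟨t, ⟨fun i => (h0 i).le, h1⟩, rfl⟩
    · exact ((isCompact_stdSimplex _ _).image hφc).isClosed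
  · rintro z ⟨t, ⟨ht0, ht1⟩, rfl⟩
    have hpne : ((p : ℝ)) ≠ 0 := Nat.cast_ne_zero.2 hp.ne'
    have hpinv : (0 : ℝ) < (p : ℝ)⁻¹ := by positivity
    set ψ : ℝ → (Fin p → ℝ) := fun δ => fun i => (1 - δ) * t i + δ * (p : ℝ)⁻¹ with hψ
    have hψc : Continuous fun δ => (fun t : Fin p → ℝ => ∑ i, t i • v i) (ψ δ) := by
      apply hφc.comp
      apply continuous_pi
      intro i
      fun_prop
    have htend : Tendsto (fun δ => (fun t : Fin p → ℝ => ∑ i, t i • v i) (ψ δ))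
        (𝓝[>] (0:ℝ)) (𝓝 (∑ i, t i • v i)) := by
      have h0 : ψ 0 = t := by funext i; simp [hψ]
      have h2 := hψc.tendsto 0
      rw [h0] at h2
      exact h2.mono_left nhdsWithin_le_nhds
    refine mem_closure_of_tendsto htend ?_
    filter_upwards [Ioo_mem_nhdsGT_of_mem (Set.mem_Ico.2 ⟨le_refl (0:ℝ), zero_lt_one⟩)]
      with δ hδ
    refine ⟨ψ δ, fun i => ?_, ?_, rfl⟩
    · have h1 : 0 ≤ (1 - δ) * t i := mul_nonneg (by linarith [hδ.2]) (ht0 i)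
      have h2 : 0 < δ * (p : ℝ)⁻¹ := mul_pos hδ.1 hpinv
      simp only [hψ]; linarith
    · simp only [hψ]
      rw [Finset.sum_add_distrib, ← Finset.mul_sum, ← Finset.mul_sum, ht1,
        Finset.sum_const, Finset.card_univ, Fintype.card_fin, nsmul_eq_mul,
        mul_inv_cancel₀ hpne]
      ring

end auxx

set_option maxHeartbeats 1000000 in
lemma supp_mono {n p : ℕ} {Ω : Set (EuclideanSpace ℝ (Fin n))}
    {v : Fin p → EuclideanSpace ℝ (Fin n)}
    (hΩ : IsProperlyConvex Ω) (hv : AffineIndependent ℝ v)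
    (hSsub : simplexOf v ⊆ Ω) (hSpe : closure (simplexOf v) ∩ Ω = simplexOf v)
    (hp : 0 < p)
    {t s : Fin p → ℝ} (ht0 : ∀ i, 0 ≤ t i) (ht1 : ∑ i, t i = 1)
    (hs0 : ∀ i, 0 ≤ s i) (hs1 : ∑ i, s i = 1)
    (hxy : (∑ i, t i • v i) ≠ ∑ i, s i • v i)
    {a b : EuclideanSpace ℝ (Fin n)} (hab : openSegment ℝ a b ⊆ closure Ω)
    (hxm : (∑ i, t i • v i) ∈ openSegment ℝ a b)
    (hym : (∑ i, s i • v i) ∈ openSegment ℝ a b) :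
    ∀ j, 0 < s j → 0 < t j := by
  intro j hj
  by_contra hjt
  have hjt0 : t j = 0 := le_antisymm (not_lt.1 hjt) (ht0 j)
  -- pick j0 maximizing s over {i | 0 < s i ∧ t i = 0}
  set J : Finset (Fin p) := Finset.univ.filter (fun i => 0 < s i ∧ t i = 0) with hJdef
  have hJne : J.Nonempty := ⟨j, by simp [hJdef, hj, hjt0]⟩
  obtain ⟨j0, hj0J, hj0max⟩ := J.exists_max_image s hJne
  have hj0 : 0 < s j0 ∧ t j0 = 0 := by simpa [hJdef] using hj0J
  -- numbers
  have hpne : ((p : ℝ)) ≠ 0 := Nat.cast_ne_zero.2 hp.ne'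
  have hpinv : (0 : ℝ) < (p : ℝ)⁻¹ := by positivity
  -- interior point of the simplex
  set cw : Fin p → ℝ := fun _ => (p : ℝ)⁻¹ with hcw
  have hcw1 : ∑ i, cw i = 1 := by
    simp only [hcw, Finset.sum_const, Finset.card_univ, Fintype.card_fin, nsmul_eq_mul]
    exact mul_inv_cancel₀ hpne
  have hcS : (∑ i, cw i • v i) ∈ simplexOf v := ⟨cw, fun i => hpinv, hcw1, rfl⟩
  -- segment parameters
  rw [openSegment_eq_image'] at hxm hym
  obtain ⟨α, hα, hxa⟩ := hxm
  obtain ⟨β, hβ, hyb⟩ := hym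
  simp only at hxa hyb
  -- choose ε
  have hev1 : ∀ᶠ ε in 𝓝[>] (0:ℝ), α - ε * (β - α) ∈ Ioo (0:ℝ) 1 := by
    have h2 : Tendsto (fun ε : ℝ => α - ε * (β - α)) (𝓝 0) (𝓝 (α - 0 * (β - α))) :=
      Continuous.tendsto (by continuity) 0
    rw [show α - 0 * (β - α) = α by ring] at h2
    exact (h2.mono_left nhdsWithin_le_nhds).eventually (isOpen_Ioo.eventually_mem hα)
  have hev2 : ∀ᶠ ε in 𝓝[>] (0:ℝ), ∀ i, 0 < t i → 0 < t i + ε * (t i - s i) := by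
    rw [eventually_all]
    intro i
    by_cases hti : 0 < t i
    · have h2 : Tendsto (fun ε : ℝ => t i + ε * (t i - s i)) (𝓝 0)
          (𝓝 (t i + 0 * (t i - s i))) := Continuous.tendsto (by continuity) 0
      rw [show t i + 0 * (t i - s i) = t i by ring] at h2
      have h2' : Tendsto (fun ε : ℝ => t i + ε * (t i - s i)) (𝓝[>] (0:ℝ)) (𝓝 (t i)) :=
        h2.mono_left nhdsWithin_le_nhds
      have h3 := h2'.eventually (isOpen_Ioi.eventually_mem (show t i ∈ Ioi (0:ℝ) from hti))
      exact h3.mono fun ε h _ => h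
    · exact Eventually.of_forall fun ε h => absurd h hti
  have hev3 : ∀ᶠ ε in 𝓝[>] (0:ℝ), (0:ℝ) < ε := eventually_mem_nhdsWithin
  obtain ⟨ε, hε1, hε2, hε0⟩ := (hev1.and (hev2.and hev3)).exists
  -- the combination parameter
  set d : ℝ := (p : ℝ)⁻¹ + ε * s j0 with hd_def
  have hd : 0 < d := by
    have := mul_pos hε0 hj0.1
    simp only [hd_def]; linarith
  set μ : ℝ := ε * s j0 / d with hμ_def
  have hμ0 : 0 < μ := div_pos (mul_pos hε0 hj0.1) hd
  have hμ1 : μ < 1 := by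
    rw [hμ_def, div_lt_one hd, hd_def]; linarith
  -- the new coordinates
  have hμd : μ * d = ε * s j0 := div_mul_cancel₀ _ hd.ne'
  have h1μ : (1 - μ) * d = (p : ℝ)⁻¹ := by rw [sub_mul, one_mul, hμd, hd_def]; ring
  set w : Fin p → ℝ := fun i => (1 - μ) * ((1 + ε) * t i - ε * s i) + μ * (p : ℝ)⁻¹
    with hw_def
  have hw1 : ∑ i, w i = 1 := by
    have hc : ∀ i, w i = (1 - μ) * (1 + ε) * t i + (-((1 - μ) * ε)) * s i + μ * (p : ℝ)⁻¹ :=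
      fun i => by simp only [hw_def]; ring
    calc ∑ i, w i
        = ∑ i, ((1 - μ) * (1 + ε) * t i + (-((1 - μ) * ε)) * s i + μ * (p : ℝ)⁻¹) :=
          Finset.sum_congr rfl fun i _ => hc i
      _ = (1 - μ) * (1 + ε) * (∑ i, t i) + (-((1 - μ) * ε)) * (∑ i, s i)
            + (p : ℝ) * (μ * (p : ℝ)⁻¹) := by
          rw [Finset.sum_add_distrib, Finset.sum_add_distrib, ← Finset.mul_sum,
            ← Finset.mul_sum, Finset.sum_const, Finset.card_univ, Fintype.card_fin,
            nsmul_eq_mul]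
      _ = 1 := by
          rw [ht1, hs1, mul_comm μ ((p:ℝ)⁻¹), ← mul_assoc, mul_inv_cancel₀ hpne]
          ring
  have hw0 : ∀ i, 0 ≤ w i := by
    intro i
    by_cases hti : 0 < t i
    · have h1 : 0 < t i + ε * (t i - s i) := hε2 i hti
      have h2 : (1 + ε) * t i - ε * s i = t i + ε * (t i - s i) := by ring
      simp only [hw_def, h2]
      have h3 : 0 < (1 - μ) * (t i + ε * (t i - s i)) := mul_pos (by linarith) h1
      have h4 : 0 < μ * (p : ℝ)⁻¹ := mul_pos hμ0 hpinv
      linarith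
    · have hti0 : t i = 0 := le_antisymm (not_lt.1 hti) (ht0 i)
      have hsle : s i ≤ s j0 := by
        by_cases h : 0 < s i
        · exact hj0max i (by simp [hJdef, h, hti0])
        · linarith [hj0.1, not_lt.1 h]
      have heq : w i * d = ε * (p : ℝ)⁻¹ * (s j0 - s i) := by
        have h5 : w i * d = -(ε * s i) * ((1 - μ) * d) + (p : ℝ)⁻¹ * (μ * d) := by
          simp only [hw_def, hti0]; ring
        rw [h5, hμd, h1μ]; ring
      have h6 : 0 ≤ w i * d := by
        rw [heq]
        exact mul_nonneg (mul_nonneg hε0.le hpinv.le) (by linarith)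
      exact (mul_nonneg_iff_of_pos_right hd).1 h6
  have hwj0 : w j0 = 0 := by
    have h2 : w j0 * d = 0 := by
      have h5 : w j0 * d = -(ε * s j0) * ((1 - μ) * d) + (p : ℝ)⁻¹ * (μ * d) := by
        simp only [hw_def, hj0.2]; ring
      rw [h5, hμd, h1μ]; ring
    exact (mul_eq_zero.1 h2).resolve_right hd.ne'
  -- the point z
  set z : EuclideanSpace ℝ (Fin n) := ∑ i, w i • v i with hz_def
  have hzcl : z ∈ closure (simplexOf v) := by
    rw [closure_simplexOf hp]
    exact ⟨w, hw0, hw1, rfl⟩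
  -- q ∈ closure Ω
  set q : EuclideanSpace ℝ (Fin n) := a + (α - ε * (β - α)) • (b - a) with hq_def
  have hqcl : q ∈ closure Ω := hab (by
    rw [openSegment_eq_image']
    exact ⟨α - ε * (β - α), hε1, rfl⟩)
  have hq' : q = (1 + ε) • (∑ i, t i • v i) - ε • (∑ i, s i • v i) := by
    rw [← hxa, ← hyb, hq_def]
    module
  -- z is on the open segment from q to the interior point
  have hz2 : z = ((1 - μ) * (1 + ε)) • (∑ i, t i • v i)
      + (-((1 - μ) * ε)) • (∑ i, s i • v i) + μ • (∑ i, cw i • v i) := by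
    rw [hz_def, comb_eq_s5, Finset.smul_sum, ← Finset.sum_add_distrib]
    refine Finset.sum_congr rfl fun i _ => ?_
    rw [smul_smul, ← add_smul]
    congr 1
    simp only [hw_def, hcw]
    ring
  have hzseg : z ∈ openSegment ℝ q (∑ i, cw i • v i) := by
    refine ⟨1 - μ, μ, by linarith, hμ0, by ring, ?_⟩
    rw [hq', hz2]
    module
  have hzΩ : z ∈ Ω := by
    have hint : (∑ i, cw i • v i) ∈ interior Ω := by
      rw [hΩ.1.interior_eq]; exact hSsub hcS
    have := hΩ.2.1.openSegment_closure_interior_subset_interior hqcl hint hzseg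
    rwa [hΩ.1.interior_eq] at this
  -- contradiction
  have hzS : z ∈ simplexOf v := by
    rw [← hSpe]; exact ⟨hzcl, hzΩ⟩
  obtain ⟨r, hr0, hr1, hreq⟩ := hzS
  have := coords_unique hv hr1 hw1 hreq.symm
  have : r j0 = w j0 := congrFun this j0
  rw [hwj0] at this
  exact absurd this (hr0 j0).ne'

set_option maxHeartbeats 1000000

/-- For a properly embedded simplex `S ⊆ Ω` and `x ∈ ∂S`:
(1) `F_S(x)` is properly embedded in `F_Ω(x)`, i.e. `∂F_S(x) ⊆ ∂F_Ω(x)`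
(both faces are open in their spans, so their boundaries are `closure F ∖ F`); and
(2) `F_S(x) = cl(S) ∩ F_Ω(x)`. -/
theorem stmt_5 {n p : ℕ} (Ω : Set (EuclideanSpace ℝ (Fin n))) (hΩ : IsProperlyConvex Ω)
    (v : Fin p → EuclideanSpace ℝ (Fin n)) (hv : AffineIndependent ℝ v)
    (hSsub : simplexOf v ⊆ Ω) (hSpe : closure (simplexOf v) ∩ Ω = simplexOf v)
    (x : EuclideanSpace ℝ (Fin n)) (hx : x ∈ closure (simplexOf v) \ simplexOf v) :
    closure (face (simplexOf v) x) \ face (simplexOf v) x ⊆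
        closure (face Ω x) \ face Ω x ∧
    face (simplexOf v) x = closure (simplexOf v) ∩ face Ω x := by
  have hp : 0 < p := by
    rcases Nat.eq_zero_or_pos p with h0 | h0
    · exfalso
      have hS : simplexOf v = (∅ : Set (EuclideanSpace ℝ (Fin n))) := by
        ext z
        simp only [simplexOf, mem_setOf_eq, mem_empty_iff_false, iff_false]
        rintro ⟨t, -, h1, -⟩
        rw [show Finset.univ (α := Fin p) = ∅ by subst h0; rfl] at h1
        simp at h1
      rw [hS, closure_empty] at hx
      exact hx.1
    · exact h0
  have hcl := closure_simplexOf (v := v) hp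
  have key : face (simplexOf v) x = closure (simplexOf v) ∩ face Ω x := by
    apply Subset.antisymm
    · intro y hy
      simp only [face, Set.mem_insert_iff, Set.mem_setOf_eq] at hy
      rcases hy with rfl | ⟨hycl, a, b, hsub, hxm, hym⟩
      · exact ⟨hx.1, mem_insert _ _⟩
      · refine ⟨hycl, ?_⟩
        simp only [face, Set.mem_insert_iff, Set.mem_setOf_eq]
        exact Or.inr ⟨(closure_mono hSsub) hycl, a, b,
          hsub.trans (closure_mono hSsub), hxm, hym⟩
    · rintro y ⟨hycl, hyF⟩
      rcases eq_or_ne y x with rfl | hne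
      · exact mem_insert _ _
      simp only [face, Set.mem_insert_iff, Set.mem_setOf_eq] at hyF
      rcases hyF with h | ⟨hyclΩ, a, b, hsub, hxm, hym⟩
      · exact absurd h hne
      -- coordinates of x and y
      have hx1 := hx.1
      rw [hcl] at hx1
      obtain ⟨t, ht0, ht1, hxd⟩ := hx1
      have hycl' := hycl
      rw [hcl] at hycl'
      obtain ⟨s, hs0, hs1, hyd⟩ := hycl'
      have hxy : (∑ i, t i • v i) ≠ (∑ i, s i • v i) := by
        rw [← hxd, ← hyd]
        exact fun h => hne h.symm
      have hxm' : (∑ i, t i • v i) ∈ openSegment ℝ a b := by rw [← hxd]; exact hxm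
      have hym' : (∑ i, s i • v i) ∈ openSegment ℝ a b := by rw [← hyd]; exact hym
      have h12 : ∀ j, 0 < s j → 0 < t j :=
        supp_mono hΩ hv hSsub hSpe hp ht0 ht1 hs0 hs1 hxy hsub hxm' hym'
      have h21 : ∀ j, 0 < t j → 0 < s j :=
        supp_mono hΩ hv hSsub hSpe hp hs0 hs1 ht0 ht1 hxy.symm hsub hym' hxm'
      -- choose a small extension parameter
      have hevA : ∀ᶠ ε in 𝓝[>] (0:ℝ), ∀ i, 0 < t i → 0 < t i - ε * (s i - t i) := by
        rw [eventually_all]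
        intro i
        by_cases hti : 0 < t i
        · have h2 : Tendsto (fun ε : ℝ => t i - ε * (s i - t i)) (𝓝 0)
              (𝓝 (t i - 0 * (s i - t i))) := Continuous.tendsto (by continuity) 0
          rw [show t i - 0 * (s i - t i) = t i by ring] at h2
          have h2' : Tendsto (fun ε : ℝ => t i - ε * (s i - t i)) (𝓝[>] (0:ℝ)) (𝓝 (t i)) :=
            h2.mono_left nhdsWithin_le_nhds
          exact (h2'.eventually (isOpen_Ioi.eventually_mem
            (show t i ∈ Ioi (0:ℝ) from hti))).mono fun ε h _ => h
        · exact Eventually.of_forall fun ε h => absurd h hti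
      have hevB : ∀ᶠ ε in 𝓝[>] (0:ℝ), ∀ i, 0 < t i → 0 < s i + ε * (s i - t i) := by
        rw [eventually_all]
        intro i
        by_cases hti : 0 < t i
        · have hsi : 0 < s i := h21 i hti
          have h2 : Tendsto (fun ε : ℝ => s i + ε * (s i - t i)) (𝓝 0)
              (𝓝 (s i + 0 * (s i - t i))) := Continuous.tendsto (by continuity) 0
          rw [show s i + 0 * (s i - t i) = s i by ring] at h2
          have h2' : Tendsto (fun ε : ℝ => s i + ε * (s i - t i)) (𝓝[>] (0:ℝ)) (𝓝 (s i)) :=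
            h2.mono_left nhdsWithin_le_nhds
          exact (h2'.eventually (isOpen_Ioi.eventually_mem
            (show s i ∈ Ioi (0:ℝ) from hsi))).mono fun ε h _ => h
        · exact Eventually.of_forall fun ε h => absurd h hti
      have hev0 : ∀ᶠ ε in 𝓝[>] (0:ℝ), (0:ℝ) < ε := eventually_mem_nhdsWithin
      obtain ⟨ε, hεA, hεB, hε0⟩ := (hevA.and (hevB.and hev0)).exists
      -- the extended segment inside the closed simplex
      have hmem : ∀ r : ℝ, -ε < r → r < 1 + ε →
          ((∑ i, t i • v i) + r • ((∑ i, s i • v i) - (∑ i, t i • v i)))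
            ∈ closure (simplexOf v) := by
        intro r hr1 hr2
        rw [line_coords v t s r, hcl]
        refine ⟨fun i => (1 - r) * t i + r * s i, fun i => ?_, ?_, rfl⟩
        · show (0:ℝ) ≤ (1 - r) * t i + r * s i
          by_cases hti : 0 < t i
          · have hA := hεA i hti
            have hB := hεB i hti
            rcases le_or_gt 0 (s i - t i) with hd | hd
            · nlinarith
            · nlinarith
          · have hti0 : t i = 0 := le_antisymm (not_lt.1 hti) (ht0 i)
            have hsi0 : s i = 0 := by
              by_contra hs'
              exact hti (h12 i ((hs0 i).lt_of_ne (Ne.symm hs')))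
            rw [hti0, hsi0]
            ring_nf
            exact le_refl 0
        · rw [Finset.sum_add_distrib, ← Finset.mul_sum, ← Finset.mul_sum, ht1, hs1]
          ring
      set X : EuclideanSpace ℝ (Fin n) := ∑ i, t i • v i with hX
      set u : EuclideanSpace ℝ (Fin n) := (∑ i, s i • v i) - ∑ i, t i • v i with hu
      have hsubS : openSegment ℝ (X + (-ε) • u) (X + (1 + ε) • u)
          ⊆ closure (simplexOf v) := by
        intro z hz
        rw [openSegment_eq_image'] at hz
        obtain ⟨θ, hθ, hzeq⟩ := hz
        have hzz : z = X + (-ε + θ * (1 + 2 * ε)) • u := by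
          rw [← hzeq]; module
        rw [hzz]
        refine hmem _ ?_ ?_
        · nlinarith [mul_pos hθ.1 (show (0:ℝ) < 1 + 2 * ε by linarith)]
        · nlinarith [mul_pos (show (0:ℝ) < 1 - θ by linarith [hθ.2])
            (show (0:ℝ) < 1 + 2 * ε by linarith)]
      have hxmem : x ∈ openSegment ℝ (X + (-ε) • u) (X + (1 + ε) • u) := by
        have h2 := mem_openSegment_line X u (show -ε < 0 by linarith)
          (show (0:ℝ) < 1 + ε by linarith)
        rw [zero_smul, add_zero] at h2
        rwa [hxd]
      have hymem : y ∈ openSegment ℝ (X + (-ε) • u) (X + (1 + ε) • u) := by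
        have h2 := mem_openSegment_line X u (show -ε < 1 by linarith)
          (show (1:ℝ) < 1 + ε by linarith)
        rw [one_smul] at h2
        have hXu : X + u = ∑ i, s i • v i := by rw [hX, hu]; module
        rw [hXu] at h2
        rwa [hyd]
      simp only [face, Set.mem_insert_iff, Set.mem_setOf_eq]
      exact Or.inr ⟨hycl, _, _, hsubS, hxmem, hymem⟩
  refine ⟨?_, key⟩
  intro z hz
  have hsub1 : face (simplexOf v) x ⊆ face Ω x := by
    rw [key]; exact inter_subset_right
  have hsub2 : face (simplexOf v) x ⊆ closure (simplexOf v) := by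
    rw [key]; exact inter_subset_left
  refine ⟨closure_mono hsub1 hz.1, fun hzF => hz.2 ?_⟩
  rw [key]
  exact ⟨closure_minimal hsub2 isClosed_closure hz.1, hzF⟩
end

section
/- Let Ω ⊂ P(ℝ^d) be a properly convex domain, S ⊂ Ω a properly embedded simplex of dimension q−1, and H = {H₁,…,H_q} a set of S-supporting hyperplanes (codimension-one linear subspaces such that each [H_j] is a supporting hyperplane of Ω containing the j-th maximal boundary face F_j of S). Then Span(S) ⊕ (∩_{H∈H} H) = ℝ^d and Ω ∩ [∩_{H∈H} H] = ∅. -/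
open Set Filter Topology

/-- `ℝ^d`, the vector space underlying `P(ℝ^d)`. -/
abbrev Ed (d : ℕ) := Fin d → ℝ

/-- The open convex cone `C ⊆ ℝ^d` representing a properly convex domain
`Ω ⊆ P(ℝ^d)` (so `π⁻¹(Ω) = C ∪ -C`): `C` is open, convex, nonempty, invariant under
positive scaling, and proper (`C ∩ -C = ∅`). -/
def IsProperConeDomain {d : ℕ} (C : Set (Ed d)) : Prop :=
  IsOpen C ∧ Convex ℝ C ∧ C.Nonempty ∧
    (∀ x ∈ C, ∀ r : ℝ, 0 < r → r • x ∈ C) ∧ C ∩ (-C) = ∅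

/-- The open cone over the rays `u 0, …, u (q-1)`: the cone representing the open
projective simplex with vertices `[u i]`. -/
def coneSimplexOf {d q : ℕ} (u : Fin q → Ed d) : Set (Ed d) :=
  {x | ∃ t : Fin q → ℝ, (∀ i, 0 < t i) ∧ x = ∑ i, t i • u i}

/-- The cone over the `j`-th maximal boundary face of the simplex with vertices `[u i]`
(the face opposite the vertex `[u j]`). -/
def coneSimplexFace {d q : ℕ} (u : Fin q → Ed d) (j : Fin q) : Set (Ed d) :=
  {x | ∃ t : Fin q → ℝ, (∀ i, 0 < t i) ∧ x = ∑ i ∈ Finset.univ.erase j, t i • u i}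

/-- The cone over the boundary `∂S` of the projective simplex with vertices `[u i]`. -/
def coneSimplexBoundary {d q : ℕ} (u : Fin q → Ed d) : Set (Ed d) :=
  {x | ∃ t : Fin q → ℝ, (∀ i, 0 ≤ t i) ∧ (∃ i, t i = 0) ∧ (∃ i, 0 < t i) ∧
    x = ∑ i, t i • u i}

/-- `[H]` is a supporting hyperplane of the projective domain with cone `C`:
`H` is a linear hyperplane with `[H] ∩ Ω = ∅` and `[H] ∩ ∂Ω ≠ ∅`. -/
def IsSupportingHyperplane {d : ℕ} (C : Set (Ed d)) (H : Submodule ℝ (Ed d)) : Prop :=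
  Module.finrank ℝ H = d - 1 ∧ (H : Set (Ed d)) ∩ C = ∅ ∧
    ((H : Set (Ed d)) ∩ (closure C \ (C ∪ {0}))).Nonempty

/-- A set of `S`-supporting hyperplanes for the properly embedded simplex with vertex
rays `u`: each `[H j]` is a supporting hyperplane of `Ω` containing the `j`-th maximal
boundary face of `S`. -/
def IsSSupporting {d q : ℕ} (C : Set (Ed d)) (u : Fin q → Ed d)
    (H : Fin q → Submodule ℝ (Ed d)) : Prop :=
  ∀ j, IsSupportingHyperplane C (H j) ∧ coneSimplexFace u j ⊆ (H j : Set (Ed d))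

/-- The simplex with vertex rays `u` is properly embedded in the domain with cone `C`. -/
def IsConePESOf {d q : ℕ} (C : Set (Ed d)) (u : Fin q → Ed d) : Prop :=
  LinearIndependent ℝ u ∧ coneSimplexOf u ⊆ C ∧
    closure (coneSimplexOf u) ∩ C = coneSimplexOf u

/-- The open face `F_Ω(x)` of a boundary ray, in the cone model: `y ∈ F(x)` iff
(after rescaling `y`) `x` and `y` lie on a common open segment inside `cl C`. -/
def coneFace {d : ℕ} (C : Set (Ed d)) (x : Ed d) : Set (Ed d) :=
  {y | y ∈ closure C ∧ ∃ r δ : ℝ, 0 < r ∧ 0 < δ ∧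
    x + δ • (x - r • y) ∈ closure C ∧ r • y + δ • (r • y - x) ∈ closure C}

/-- All nonzero multiples of elements of `A`: two subsets of `ℝ^d ∖ {0}` determine the
same subset of `P(ℝ^d)` iff they have the same `projSaturation`. -/
def projSaturation {d : ℕ} (A : Set (Ed d)) : Set (Ed d) :=
  {y | ∃ x ∈ A, ∃ r : ℝ, r ≠ 0 ∧ y = r • x}

lemma aux_finrank_iInf {d q : ℕ} (H : Fin q → Submodule ℝ (Ed d))
    (hH : ∀ j, Module.finrank ℝ (H j) = d - 1) :
    d ≤ Module.finrank ℝ (⨅ j, H j : Submodule ℝ (Ed d)) + q := by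
  have hd : Module.finrank ℝ (Ed d) = d := by
    simp [Module.finrank_pi]
  have key : ∀ s : Finset (Fin q),
      d ≤ Module.finrank ℝ (⨅ j ∈ s, H j : Submodule ℝ (Ed d)) + s.card := by
    intro s
    induction s using Finset.induction with
    | empty =>
      rw [show (⨅ j ∈ (∅ : Finset (Fin q)), H j) = ⊤ by simp, finrank_top, hd]
      simp
    | insert a s ha ih =>
      rw [Finset.iInf_insert, Finset.card_insert_of_notMem ha]
      have heq := Submodule.finrank_sup_add_finrank_inf_eq (H a) (⨅ j ∈ s, H j)
      have hle := Submodule.finrank_le (H a ⊔ ⨅ j ∈ s, H j)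
      rw [hd] at hle
      have := hH a
      omega
  have h := key Finset.univ
  have huniv : (⨅ j ∈ (Finset.univ : Finset (Fin q)), H j) = ⨅ j, H j := by
    simp
  rw [huniv, Finset.card_univ, Fintype.card_fin] at h
  exact h

/-- If `S ⊆ Ω` is a properly embedded simplex of dimension `q − 1` and
`H = {H₁,…,H_q}` is a set of `S`-supporting hyperplanes, then
`Span(S) ⊕ (∩_j H_j) = ℝ^d` and `Ω ∩ [∩_j H_j] = ∅`. -/
theorem stmt_6 {d q : ℕ} (C : Set (Ed d)) (hC : IsProperConeDomain C)
    (u : Fin q → Ed d) (hPES : IsConePESOf C u)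
    (H : Fin q → Submodule ℝ (Ed d)) (hH : IsSSupporting C u H) :
    IsCompl (Submodule.span ℝ (Set.range u)) (⨅ j, H j) ∧
      C ∩ ((⨅ j, H j : Submodule ℝ (Ed d)) : Set (Ed d)) = ∅ := by
  obtain ⟨hopen, hconv, hne, hscale, hproper⟩ := hC
  obtain ⟨hli, hsubC, hclo⟩ := hPES
  rcases Nat.eq_zero_or_pos q with hq0 | hq
  · exfalso
    subst hq0
    have h0 : (0 : Ed d) ∈ coneSimplexOf u :=
      ⟨fun i => 1, fun i => one_pos, by simp⟩
    have h0C : (0 : Ed d) ∈ C := hsubC h0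
    have hmem : (0 : Ed d) ∈ C ∩ (-C) := ⟨h0C, by simpa using h0C⟩
    rw [hproper] at hmem
    exact hmem
  -- The sum of the vertices lies in C
  have hmemC : (∑ i, u i) ∈ C := by
    apply hsubC
    exact ⟨fun _ => 1, fun _ => one_pos, by simp⟩
  -- vertices other than j lie in H j
  have huH : ∀ j, ∀ i, i ≠ j → u i ∈ H j := by
    intro j i hij
    have hiej : i ∈ Finset.univ.erase j := Finset.mem_erase.mpr ⟨hij, Finset.mem_univ i⟩
    have ha : (∑ k ∈ Finset.univ.erase j, (1 : ℝ) • u k) ∈ coneSimplexFace u j :=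
      ⟨fun _ => 1, fun _ => one_pos, rfl⟩
    have hb : (∑ k ∈ Finset.univ.erase j, (if k = i then (2 : ℝ) else 1) • u k)
        ∈ coneSimplexFace u j :=
      ⟨fun k => if k = i then 2 else 1, fun k => by by_cases h : k = i <;> simp [h], rfl⟩
    have ha' : (∑ k ∈ Finset.univ.erase j, (1 : ℝ) • u k) ∈ H j := (hH j).2 ha
    have hb' : (∑ k ∈ Finset.univ.erase j, (if k = i then (2 : ℝ) else 1) • u k) ∈ H j :=
      (hH j).2 hb
    have hmem := Submodule.sub_mem _ hb' ha'
    have key : (∑ k ∈ Finset.univ.erase j, (if k = i then (2 : ℝ) else 1) • u k)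
        - (∑ k ∈ Finset.univ.erase j, (1 : ℝ) • u k) = u i := by
      rw [← Finset.sum_sub_distrib]
      rw [Finset.sum_eq_single_of_mem i hiej]
      · simp [two_smul]
      · intro k _ hk
        simp [hk]
    rwa [key] at hmem
  -- the vertex j does not lie in H j
  have huHj : ∀ j, u j ∉ H j := by
    intro j hmem
    have hall : ∀ i, u i ∈ H j := by
      intro i
      by_cases h : i = j
      · subst h; exact hmem
      · exact huH j i h
    have hsum : (∑ i, u i) ∈ H j := Submodule.sum_mem _ fun i _ => hall i
    have hx : (∑ i, u i) ∈ ((H j : Set (Ed d)) ∩ C) := ⟨hsum, hmemC⟩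
    rw [(hH j).1.2.1] at hx
    exact hx
  -- disjointness
  have hdisj : Submodule.span ℝ (Set.range u) ⊓ (⨅ j, H j) = ⊥ := by
    rw [eq_bot_iff]
    rintro v ⟨hvV, hvN⟩
    obtain ⟨t, hteq⟩ := (Submodule.mem_span_range_iff_exists_fun ℝ).mp hvV
    have ht0 : ∀ j, t j = 0 := by
      intro j
      by_contra htj
      have hvj : v ∈ H j := (Submodule.mem_iInf H).mp hvN j
      have h1 : (∑ i ∈ Finset.univ.erase j, t i • u i) ∈ H j :=
        Submodule.sum_mem _ fun i hi =>
          Submodule.smul_mem _ _ (huH j i (Finset.mem_erase.mp hi).1)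
      have h2 : t j • u j ∈ H j := by
        have hsplit : t j • u j = v - ∑ i ∈ Finset.univ.erase j, t i • u i := by
          rw [← hteq, ← Finset.add_sum_erase _ _ (Finset.mem_univ j)]
          abel
        rw [hsplit]
        exact Submodule.sub_mem _ hvj h1
      have : u j ∈ H j := by
        have := Submodule.smul_mem _ (t j)⁻¹ h2
        rwa [inv_smul_smul₀ htj] at this
      exact huHj j this
    have : v = 0 := by
      rw [← hteq]
      simp [ht0]
    simp [this]
  -- rank computation
  have hd : Module.finrank ℝ (Ed d) = d := by simp [Module.finrank_pi]
  have hrankN : d ≤ Module.finrank ℝ (⨅ j, H j : Submodule ℝ (Ed d)) + q :=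
    aux_finrank_iInf H fun j => (hH j).1.1
  have hrankV : Module.finrank ℝ (Submodule.span ℝ (Set.range u)) = q := by
    rw [finrank_span_eq_card hli, Fintype.card_fin]
  have hsup : Submodule.span ℝ (Set.range u) ⊔ (⨅ j, H j) = ⊤ := by
    apply Submodule.eq_top_of_finrank_eq
    rw [hd]
    have heq := Submodule.finrank_sup_add_finrank_inf_eq
      (Submodule.span ℝ (Set.range u)) (⨅ j, H j)
    rw [hdisj, hrankV] at heq
    have hle := Submodule.finrank_le (Submodule.span ℝ (Set.range u) ⊔ ⨅ j, H j)
    rw [hd] at hle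
    simp only [finrank_bot] at heq
    omega
  constructor
  · exact ⟨disjoint_iff.mpr hdisj, codisjoint_iff.mpr hsup⟩
  · rw [Set.eq_empty_iff_forall_notMem]
    rintro x ⟨hxC, hxN⟩
    have hx0 : x ∈ H ⟨0, hq⟩ := (Submodule.mem_iInf H).mp hxN ⟨0, hq⟩
    have hmem : x ∈ ((H ⟨0, hq⟩ : Set (Ed d)) ∩ C) := ⟨hx0, hxC⟩
    rw [(hH ⟨0, hq⟩).1.2.1] at hmem
    exact hmem
end

section
/- Let Ω ⊂ P(ℝ^d) be a properly convex domain, S ⊂ Ω a properly embedded simplex, and H a set of S-supporting hyperplanes. Let L_{S,H} be the linear projection onto Span(S) with kernel ∩_{H∈H} H (well-defined by the direct sum decomposition Span(S) ⊕ (∩H) = ℝ^d). Then the induced projective map satisfies L_{S,H}(Ω) = S. -/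
open Set Filter Topology

/-- Let `L = L_{S,H}` be the linear projection onto `Span S` with kernel
`∩_{H∈H} H`.  Then the induced projective map satisfies `L(Ω) = S`: in the cone model,
the nonzero multiples of `L(C)` are exactly the nonzero multiples of the simplex cone. -/
theorem stmt_7 {d q : ℕ} (C : Set (Ed d)) (hC : IsProperConeDomain C)
    (u : Fin q → Ed d) (hPES : IsConePESOf C u)
    (H : Fin q → Submodule ℝ (Ed d)) (hH : IsSSupporting C u H)
    (L : Ed d →ₗ[ℝ] Ed d)
    (hL1 : ∀ x ∈ Submodule.span ℝ (Set.range u), L x = x)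
    (hL0 : ∀ x ∈ (⨅ j, H j : Submodule ℝ (Ed d)), L x = 0) :
    projSaturation (L '' C) = projSaturation (coneSimplexOf u) := by
  classical
  -- The sum of all vertices lies in the simplex cone, hence in C.
  have hsΔ : (∑ i, u i) ∈ coneSimplexOf u :=
    ⟨fun _ => 1, fun _ => one_pos, by simp⟩
  have hsC : (∑ i, u i) ∈ C := hPES.2.1 hsΔ
  -- Each u i, for i ≠ j, lies in H j.
  have hmem : ∀ j i, i ≠ j → u i ∈ H j := by
    intro j i hij
    have h1 : (∑ k ∈ Finset.univ.erase j, (1:ℝ) • u k) ∈ (H j : Set (Ed d)) :=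
      (hH j).2 ⟨fun _ => 1, fun _ => one_pos, rfl⟩
    have h2 : (∑ k ∈ Finset.univ.erase j,
        (if k = i then (2:ℝ) else 1) • u k) ∈ (H j : Set (Ed d)) :=
      (hH j).2 ⟨fun k => if k = i then 2 else 1,
        fun k => by by_cases h : k = i <;> simp [h], rfl⟩
    have hd : (∑ k ∈ Finset.univ.erase j, (if k = i then (2:ℝ) else 1) • u k)
        - (∑ k ∈ Finset.univ.erase j, (1:ℝ) • u k) = u i := by
      rw [← Finset.sum_sub_distrib]
      have : ∀ k ∈ Finset.univ.erase j,
          (if k = i then (2:ℝ) else 1) • u k - (1:ℝ) • u k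
            = if k = i then u i else 0 := by
        intro k _
        by_cases h : k = i
        · subst h
          split_ifs with h'
          · module
          · exact absurd rfl h'
        · simp [h]
      rw [Finset.sum_congr rfl this, Finset.sum_ite_eq'
        (Finset.univ.erase j) i (fun _ => u i)]
      simp [Finset.mem_erase, hij]
    have := Submodule.sub_mem (H j) h2 h1
    rwa [hd] at this
  -- u j ∉ H j.
  have hnmem : ∀ j, u j ∉ H j := by
    intro j hj
    have hs : (∑ i, u i) ∈ H j := by
      have : (∑ i, u i) = u j + ∑ i ∈ Finset.univ.erase j, u i := by
        rw [Finset.add_sum_erase _ _ (Finset.mem_univ j)]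
      rw [this]
      exact Submodule.add_mem _ hj
        (Submodule.sum_mem _ fun i hi => hmem j i (Finset.mem_erase.1 hi).1)
    have : (∑ i, u i) ∈ (H j : Set (Ed d)) ∩ C := ⟨hs, hsC⟩
    rw [(hH j).1.2.1] at this
    exact this
  -- Functionals f j with f j (u j) = 1 and ker (f j) = H j.
  have hExists : ∀ j, ∃ f : Module.Dual ℝ (Ed d),
      f (u j) = 1 ∧ LinearMap.ker f = H j := by
    intro j
    obtain ⟨g, hg1, hg0⟩ :=
      (H j).exists_dual_map_eq_bot_of_notMem (hnmem j) inferInstance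
    refine ⟨(g (u j))⁻¹ • g, by simp [inv_mul_cancel₀ hg1], ?_⟩
    have hle : H j ≤ LinearMap.ker ((g (u j))⁻¹ • g) := by
      intro x hx
      have : g x = 0 := by
        have : g x ∈ Submodule.map g (H j) := ⟨x, hx, rfl⟩
        rw [hg0] at this
        simpa using this
      simp [LinearMap.mem_ker, this]
    have hne : ((g (u j))⁻¹ • g) ≠ 0 := by
      intro h
      have := congrArg (fun f => f (u j)) h
      simp [inv_mul_cancel₀ hg1] at this
    -- finrank of the kernel is d - 1
    have hrange : LinearMap.range ((g (u j))⁻¹ • g) = ⊤ := by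
      rw [LinearMap.range_eq_top]
      intro c
      refine ⟨c • u j, ?_⟩
      simp only [LinearMap.smul_apply, map_smul, smul_eq_mul]
      field_simp
    have hrn := LinearMap.finrank_range_add_finrank_ker ((g (u j))⁻¹ • g)
    rw [hrange, finrank_top, Module.finrank_self, Module.finrank_fin_fun] at hrn
    have hdpos : 1 ≤ d := by omega
    have hker : Module.finrank ℝ (LinearMap.ker ((g (u j))⁻¹ • g)) = d - 1 := by
      omega
    exact (Submodule.eq_of_le_of_finrank_le hle (by
      rw [hker, (hH j).1.1])).symm
  choose f hf1 hfker using hExists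
  -- f j is positive on C.
  have hpos : ∀ j, ∀ x ∈ C, 0 < f j x := by
    intro j x hx
    by_contra hle
    push_neg at hle
    have hxne : f j x ≠ 0 := by
      intro h0
      have : x ∈ (H j : Set (Ed d)) ∩ C := ⟨by rw [← hfker j]; exact h0, hx⟩
      rw [(hH j).1.2.1] at this
      exact this
    have ha : f j x < 0 := lt_of_le_of_ne hle hxne
    set a := f j x with hadef
    have hfs : f j (∑ i, u i) = 1 := by
      rw [map_sum]
      rw [Finset.sum_eq_single j]
      · exact hf1 j
      · intro i _ hij
        have : u i ∈ LinearMap.ker (f j) := by rw [hfker j]; exact hmem j i hij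
        exact this
      · simp
    set c : ℝ := -a / (1 - a) with hcdef
    have h1a : (0:ℝ) < 1 - a := by linarith
    have hc0 : 0 ≤ c := div_nonneg (by linarith) (le_of_lt h1a)
    have hc1 : 0 ≤ 1 - c := by
      rw [hcdef]; rw [sub_nonneg, div_le_one h1a]; linarith
    have hsum : c + (1 - c) = 1 := by ring
    have hpC : c • (∑ i, u i) + (1 - c) • x ∈ C :=
      hC.2.1 hsC hx hc0 hc1 hsum
    have hfp : f j (c • (∑ i, u i) + (1 - c) • x) = 0 := by
      rw [map_add, map_smul, map_smul, hfs, ← hadef]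
      simp only [smul_eq_mul, mul_one, hcdef]
      field_simp
      ring
    have : c • (∑ i, u i) + (1 - c) • x ∈ (H j : Set (Ed d)) ∩ C :=
      ⟨by rw [← hfker j]; exact hfp, hpC⟩
    rw [(hH j).1.2.1] at this
    exact this
  -- For x ∈ C, L x = ∑ j, f j x • u j.
  have hLx : ∀ x : Ed d, L x = ∑ j, f j x • u j := by
    intro x
    have hMspan : (∑ j, f j x • u j) ∈ Submodule.span ℝ (Set.range u) :=
      Submodule.sum_mem _ fun j _ =>
        Submodule.smul_mem _ _ (Submodule.subset_span (Set.mem_range_self j))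
    have hker : x - (∑ j, f j x • u j) ∈ (⨅ j, H j : Submodule ℝ (Ed d)) := by
      rw [Submodule.mem_iInf]
      intro k
      rw [← hfker k, LinearMap.mem_ker, map_sub, map_sum]
      have : ∀ j ∈ Finset.univ, f k (f j x • u j)
          = if j = k then f j x else 0 := by
        intro j _
        by_cases h : j = k
        · subst h; simp [hf1 j]
        · have hk0 : f k (u j) = 0 := by
            rw [← LinearMap.mem_ker, hfker k]; exact hmem k j h
          simp [h, hk0]
      rw [Finset.sum_congr rfl this, Finset.sum_ite_eq' Finset.univ k
        (fun j => f j x)]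
      simp
    have : L (x - (∑ j, f j x • u j)) = 0 := hL0 _ hker
    rw [map_sub, hL1 _ hMspan, sub_eq_zero] at this
    exact this
  -- Now prove the set equality.
  ext y
  constructor
  · rintro ⟨z, ⟨x, hxC, rfl⟩, r, hr, rfl⟩
    exact ⟨∑ j, f j x • u j, ⟨fun j => f j x, fun j => hpos j x hxC, rfl⟩,
      r, hr, by rw [hLx x]⟩
  · rintro ⟨z, hz, r, hr, rfl⟩
    have hzspan : z ∈ Submodule.span ℝ (Set.range u) := by
      obtain ⟨t, _, rfl⟩ := hz
      exact Submodule.sum_mem _ fun j _ =>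
        Submodule.smul_mem _ _ (Submodule.subset_span (Set.mem_range_self j))
    exact ⟨z, ⟨z, hPES.2.1 hz, hL1 z hzspan⟩, r, hr, rfl⟩
end

section
/- Let Ω ⊂ P(ℝ^d) be a properly convex domain, S ⊂ Ω a properly embedded simplex, and H a set of S-supporting hyperplanes. Then: (1) if x ∈ ∂Ω ∩ [∩_{H∈H} H] and y ∈ ∂S, the whole segment [x,y] lies in ∂Ω; and (2) [∩_{H∈H} H] is disjoint from the union of open faces F_Ω(∂S) = ∪_{y∈∂S} F_Ω(y). -/
open Set Filter Topology

lemma clC_zero {d : ℕ} {C : Set (Ed d)} (hC : IsProperConeDomain C) :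
    (0 : Ed d) ∈ closure C := by
  obtain ⟨c, hc⟩ := hC.2.2.1
  have hmem : ∀ n : ℕ, (1 / (n+1) : ℝ) • c ∈ C := fun n =>
    hC.2.2.2.1 c hc _ (by positivity)
  have htend : Tendsto (fun n : ℕ => (1 / (n+1) : ℝ) • c) atTop (𝓝 (0 : Ed d)) := by
    have h : Tendsto (fun n : ℕ => 1 / ((n : ℝ) + 1)) atTop (𝓝 0) := tendsto_one_div_add_atTop_nhds_zero_nat
    simpa using h.smul_const c
  exact mem_closure_of_tendsto htend (Eventually.of_forall hmem)

lemma clC_smul {d : ℕ} {C : Set (Ed d)} (hC : IsProperConeDomain C) {x : Ed d}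
    (hx : x ∈ closure C) {r : ℝ} (hr : 0 ≤ r) : r • x ∈ closure C := by
  rcases hr.eq_or_lt with h | h
  · simpa [← h] using clC_zero hC
  · have hmap : (fun w : Ed d => r • w) '' C ⊆ C := by
      rintro _ ⟨w, hw, rfl⟩; exact hC.2.2.2.1 w hw r h
    have hcont : Continuous fun w : Ed d => r • w := continuous_const_smul r
    have h1 : r • x ∈ closure ((fun w : Ed d => r • w) '' C) :=
      image_closure_subset_closure_image hcont ⟨x, hx, rfl⟩
    exact closure_mono hmap h1

lemma clC_add {d : ℕ} {C : Set (Ed d)} (hC : IsProperConeDomain C) {x y : Ed d}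
    (hx : x ∈ closure C) (hy : y ∈ closure C) : x + y ∈ closure C := by
  have hconv : Convex ℝ (closure C) := hC.2.1.closure
  have hm : (1/2 : ℝ) • x + (1/2 : ℝ) • y ∈ closure C :=
    hconv hx hy (by norm_num) (by norm_num) (by norm_num)
  have := clC_smul hC hm (by norm_num : (0:ℝ) ≤ 2)
  have heq : (2:ℝ) • ((1/2 : ℝ) • x + (1/2 : ℝ) • y) = x + y := by
    rw [smul_add, smul_smul, smul_smul]; norm_num
  rwa [heq] at this

lemma u_mem_clC {d q : ℕ} {C : Set (Ed d)} {u : Fin q → Ed d}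
    (hsub : coneSimplexOf u ⊆ C) (i : Fin q) : u i ∈ closure C := by
  have hmem : ∀ n : ℕ, u i + (1/(n+1) : ℝ) • (∑ j, u j) ∈ C := by
    intro n
    apply hsub
    refine ⟨fun j => (1/(n+1) : ℝ) + (if j = i then 1 else 0), ?_, ?_⟩
    · intro j; by_cases h : j = i <;> simp [h] <;> positivity
    · rw [Finset.sum_congr rfl (fun j _ => add_smul ((1/(n+1):ℝ)) _ (u j)),
        Finset.sum_add_distrib]
      simp [Finset.smul_sum, ite_smul, add_comm]
  have htend : Tendsto (fun n : ℕ => u i + (1/(n+1) : ℝ) • (∑ j, u j)) atTop (𝓝 (u i)) := by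
    have h : Tendsto (fun n : ℕ => 1 / ((n : ℝ) + 1)) atTop (𝓝 0) := tendsto_one_div_add_atTop_nhds_zero_nat
    have h2 := h.smul_const (∑ j, u j)
    have := (tendsto_const_nhds (x := u i) (f := atTop (α := ℕ))).add h2
    simpa using this
  exact mem_closure_of_tendsto htend (Eventually.of_forall hmem)

lemma vertex_mem_H {d q : ℕ} {u : Fin q → Ed d} {Hj : Submodule ℝ (Ed d)} {j : Fin q}
    (hface : coneSimplexFace u j ⊆ (Hj : Set (Ed d))) {k : Fin q} (hk : k ≠ j) :
    u k ∈ Hj := by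
  have ha : (∑ i ∈ Finset.univ.erase j, u i) ∈ Hj := by
    refine hface ⟨fun _ => 1, fun _ => one_pos, ?_⟩
    simp
  have hkmem : k ∈ Finset.univ.erase j := Finset.mem_erase.2 ⟨hk, Finset.mem_univ k⟩
  have hb : (∑ i ∈ Finset.univ.erase j, u i) + u k ∈ Hj := by
    refine hface ⟨fun i => if i = k then 2 else 1, fun i => by by_cases h : i = k <;> simp [h], ?_⟩
    have key : ∀ i, (if i = k then (2:ℝ) else 1) • u i
        = u i + (if i = k then (1:ℝ) else 0) • u i := by
      intro i; split <;> simp [two_smul]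
    rw [Finset.sum_congr rfl (fun i _ => key i), Finset.sum_add_distrib]
    simp [ite_smul, Finset.sum_ite_eq', hkmem]
  have := Hj.sub_mem hb ha
  simpa using this

lemma exists_functional {d : ℕ} {C : Set (Ed d)} (hC : IsProperConeDomain C)
    {H : Submodule ℝ (Ed d)} (hrank : Module.finrank ℝ H = d - 1)
    (hdisj : (H : Set (Ed d)) ∩ C = ∅) :
    ∃ f : Ed d →ₗ[ℝ] ℝ, (∀ w ∈ closure C, 0 ≤ f w) ∧ ∀ w, f w = 0 ↔ w ∈ H := by
  obtain ⟨c, hc⟩ := hC.2.2.1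
  have hd : 1 ≤ d := by
    by_contra h
    push_neg at h
    interval_cases d
    have hc0 : c = 0 := Subsingleton.elim _ _
    have h0 : (0 : Ed 0) ∈ C := by rwa [hc0] at hc
    have : (0 : Ed 0) ∈ C ∩ (-C) := ⟨h0, by simpa using h0⟩
    rw [hC.2.2.2.2] at this
    exact this
  have hfr : Module.finrank ℝ (Ed d) = d := Module.finrank_fin_fun ℝ
  have hq : Module.finrank ℝ (Ed d ⧸ H) = 1 := by
    have := H.finrank_quotient_add_finrank
    rw [hrank, hfr] at this
    omega
  let e : (Ed d ⧸ H) ≃ₗ[ℝ] ℝ := LinearEquiv.ofFinrankEq _ _ (by rw [hq, Module.finrank_self])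
  let f0 : Ed d →ₗ[ℝ] ℝ := e.toLinearMap ∘ₗ H.mkQ
  have hker0 : ∀ w, f0 w = 0 ↔ w ∈ H := by
    intro w
    simp only [f0, LinearMap.comp_apply, LinearEquiv.coe_coe]
    rw [LinearEquiv.map_eq_zero_iff]
    exact Submodule.Quotient.mk_eq_zero H
  have hdisj' : ∀ w ∈ C, w ∉ H := by
    intro w hw hwH
    exact (Set.eq_empty_iff_forall_notMem.1 hdisj w) ⟨hwH, hw⟩
  have hfc : f0 c ≠ 0 := fun h => hdisj' c hc ((hker0 c).1 h)
  obtain ⟨g, hgker, hgc⟩ : ∃ g : Ed d →ₗ[ℝ] ℝ, (∀ w, g w = 0 ↔ w ∈ H) ∧ 0 < g c := by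
    rcases lt_or_gt_of_ne hfc with h | h
    · exact ⟨-f0, fun w => by simp [hker0 w], by simpa using h⟩
    · exact ⟨f0, hker0, h⟩
  have hpos : ∀ w ∈ C, 0 < g w := by
    intro w hw
    by_contra hle
    push_neg at hle
    rcases hle.eq_or_lt with h | h
    · exact hdisj' w hw ((hgker w).1 h)
    · set a := g c with ha
      set b := g w with hb
      have hab : 0 < a - b := by dsimp [a, b] at *; linarith
      set lam := a / (a - b) with hlam
      have hl0 : 0 < lam := div_pos hgc hab
      have hl1 : lam < 1 := by
        rw [hlam, div_lt_one hab]; dsimp [a, b] at *; linarith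
      have hp : lam • w + (1 - lam) • c ∈ C :=
        hC.2.1 hw hc (le_of_lt hl0) (by linarith) (by ring)
      have hgp : g (lam • w + (1 - lam) • c) = 0 := by
        simp only [map_add, map_smul, smul_eq_mul, ← hb, ← ha]
        rw [hlam]
        field_simp
        ring
      exact hdisj' _ hp ((hgker _).1 hgp)
  refine ⟨g, ?_, hgker⟩
  have hclosed : IsClosed {w : Ed d | 0 ≤ g w} :=
    IsClosed.preimage g.continuous_of_finiteDimensional isClosed_Ici
  have hsub : C ⊆ {w : Ed d | 0 ≤ g w} := fun w hw => (hpos w hw).le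
  intro w hw
  exact closure_minimal hsub hclosed hw

/-- (1) If `x ∈ ∂Ω ∩ [∩_j H_j]` and `y ∈ ∂S`, then the segment `[x,y]`
lies in `∂Ω` (in the cone model: all combinations `s•x + t•y` with `s,t ≥ 0`, `s+t > 0`,
lie in `cl C ∖ C`).  (2) `[∩_j H_j]` is disjoint from `F_Ω(∂S) = ∪_{y ∈ ∂S} F_Ω(y)`. -/
theorem stmt_8 {d q : ℕ} (C : Set (Ed d)) (hC : IsProperConeDomain C)
    (u : Fin q → Ed d) (hPES : IsConePESOf C u)
    (H : Fin q → Submodule ℝ (Ed d)) (hH : IsSSupporting C u H) :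
    (∀ x : Ed d, x ∈ closure C \ C → x ∈ (⨅ j, H j : Submodule ℝ (Ed d)) →
      ∀ y ∈ coneSimplexBoundary u, ∀ s t : ℝ, 0 ≤ s → 0 ≤ t → 0 < s + t →
        s • x + t • y ∈ closure C \ C) ∧
    ((((⨅ j, H j : Submodule ℝ (Ed d)) : Set (Ed d)) ∩
      ⋃ y ∈ coneSimplexBoundary u, coneFace C y) = ∅) := by
  constructor
  · rintro x ⟨hxcl, hxC⟩ hxH y ⟨c, hc0, ⟨j0, hcj0⟩, -, rfl⟩ s t hs ht hst
    have hycl : (∑ i, c i • u i) ∈ closure C :=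
      Finset.sum_induction _ (· ∈ closure C) (fun a b ha hb => clC_add hC ha hb)
        (clC_zero hC) (fun i _ => clC_smul hC (u_mem_clC hPES.2.1 i) (hc0 i))
    have hyH : (∑ i, c i • u i) ∈ H j0 := by
      rw [← Finset.add_sum_erase _ (fun i => c i • u i) (Finset.mem_univ j0), hcj0,
        zero_smul, zero_add]
      exact Submodule.sum_mem _ fun i hi =>
        Submodule.smul_mem _ _ (vertex_mem_H (hH j0).2 (Finset.ne_of_mem_erase hi))
    have hxj0 : x ∈ H j0 := (Submodule.mem_iInf _).1 hxH j0
    refine ⟨clC_add hC (clC_smul hC hxcl hs) (clC_smul hC hycl ht), ?_⟩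
    intro hmemC
    have hmemH : s • x + t • (∑ i, c i • u i) ∈ H j0 :=
      Submodule.add_mem _ (Submodule.smul_mem _ _ hxj0) (Submodule.smul_mem _ _ hyH)
    exact (Set.eq_empty_iff_forall_notMem.1 (hH j0).1.2.1 _) ⟨hmemH, hmemC⟩
  · rw [Set.eq_empty_iff_forall_notMem]
    rintro z ⟨hzH, hzU⟩
    simp only [Set.mem_iUnion] at hzU
    obtain ⟨y, ⟨c, hc0, -, ⟨j1, hcj1⟩, rfl⟩, hzcl, r, δ, hr, hδ, -, h2⟩ := hzU
    obtain ⟨f, hfcl, hfker⟩ := exists_functional hC (hH j1).1.1 (hH j1).1.2.1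
    have hz1 : f z = 0 := (hfker z).2 ((Submodule.mem_iInf _).1 hzH j1)
    have huk : ∀ k, k ≠ j1 → f (u k) = 0 := fun k hk =>
      (hfker _).2 (vertex_mem_H (hH j1).2 hk)
    have hu1 : 0 < f (u j1) := by
      rcases (hfcl _ (u_mem_clC hPES.2.1 j1)).eq_or_lt with h | h
      · exfalso
        have hall : ∀ i, u i ∈ H j1 := by
          intro i
          by_cases hij : i = j1
          · subst hij; exact (hfker _).1 h.symm
          · exact vertex_mem_H (hH j1).2 hij
        have hsum : (∑ i, u i) ∈ H j1 := Submodule.sum_mem _ fun i _ => hall i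
        have hsumC : (∑ i, u i) ∈ C := hPES.2.1 ⟨fun _ => 1, fun _ => one_pos, by simp⟩
        exact (Set.eq_empty_iff_forall_notMem.1 (hH j1).1.2.1 _) ⟨hsum, hsumC⟩
      · exact h
    have hfy : f (∑ i, c i • u i) = c j1 * f (u j1) := by
      rw [map_sum]
      simp only [map_smul, smul_eq_mul]
      exact Finset.sum_eq_single j1 (fun b _ hb => by rw [huk b hb, mul_zero])
        (fun hmem => absurd (Finset.mem_univ j1) hmem)
    have hfypos : 0 < f (∑ i, c i • u i) := hfy ▸ mul_pos hcj1 hu1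
    have hp := hfcl _ h2
    simp only [map_add, map_smul, map_sub, hz1, smul_eq_mul, mul_zero, zero_sub] at hp
    nlinarith [mul_pos hδ hfypos]
end
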